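/- arXiv:math/0507159 — 6 statements merged into one kernel-verified Lean document; each statement's English description precedes it below -/
import Mathlib

section
/- Let A and B be n×n real matrices forming a regular matrix pencil, i.e. there exists λ ∈ ℝ with det(λ·A + B) ≠ 0. Then there exist invertible n×n real matrices P and Q and natural numbers d, q with d + q = n such that P·A·Q is the block-diagonal matrix with blocks I_d (the d×d identity) and N, and P·B·Q is the block-diagonal matrix with blocks J and I_q (the q×q identity), where N is a nilpotent q×q real matrix and J is some d×d real matrix. -/
/-! Multiplying by `T⁻¹`, where `T = l • A + B` is invertible, replaces the pencil by
`(M, 1 - l • M)` with `M = T⁻¹ * A`. The Fitting decomposition of `M` (kernel and range of a high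
power of `M`) makes `M` similar to `diag(M₁, M₀)` with `M₁` invertible and `M₀` nilpotent;
left multiplication by `diag(M₁⁻¹, (1 - l • M₀)⁻¹)` then turns the pencil into
`(diag(1, N), diag(J, 1))`, where `N = (1 - l • M₀)⁻¹ * M₀` is nilpotent because its two factors commute. -/

open Module Matrix

namespace Module.End

variable {R M : Type*} [Ring R] [AddCommGroup M] [Module R M]

lemma apply_mem_ker_pow (f : End R M) (k : ℕ) :
    ∀ x ∈ LinearMap.ker (f ^ k), f x ∈ LinearMap.ker (f ^ k) := fun x hx => by
  rw [LinearMap.mem_ker, ← mul_apply, ← pow_succ, pow_succ', mul_apply, LinearMap.mem_ker.mp hx,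
    map_zero]

lemma apply_mem_range_pow (f : End R M) (k : ℕ) :
    ∀ x ∈ LinearMap.range (f ^ k), f x ∈ LinearMap.range (f ^ k) := by
  rintro _ ⟨y, rfl⟩
  exact ⟨f y, by rw [← mul_apply, ← pow_succ, pow_succ', mul_apply]⟩

lemma isNilpotent_restrict_ker_pow (f : End R M) (k : ℕ) :
    IsNilpotent (f.restrict (f.apply_mem_ker_pow k)) := by
  refine ⟨k, LinearMap.ext fun x => Subtype.ext ?_⟩
  rw [pow_restrict, LinearMap.restrict_apply]
  exact LinearMap.mem_ker.mp x.2

lemma isUnit_restrict_range_pow {K V : Type*} [Field K] [AddCommGroup V] [Module K V]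
    [FiniteDimensional K V] (f : End K V) {k : ℕ} (hk : k ≠ 0)
    (hdisj : Disjoint (LinearMap.ker (f ^ k)) (LinearMap.range (f ^ k))) :
    IsUnit (f.restrict (f.apply_mem_range_pow k)) := by
  have hinj : Function.Injective (f.restrict (f.apply_mem_range_pow k)) := by
    rw [← LinearMap.ker_eq_bot, Submodule.eq_bot_iff]
    rintro ⟨x, hx⟩ hfx
    have hker : x ∈ LinearMap.ker (f ^ k) := by
      obtain ⟨j, rfl⟩ := Nat.exists_eq_succ_of_ne_zero hk
      have hfx' : f x = 0 := congrArg Subtype.val hfx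
      rw [LinearMap.mem_ker, pow_succ, mul_apply, hfx', map_zero]
    exact Subtype.ext (Submodule.disjoint_def.mp hdisj x hker hx)
  exact (isUnit_iff _).mpr ⟨hinj, LinearMap.injective_iff_surjective.mp hinj⟩

end Module.End

lemma Submodule.prodEquivOfIsCompl_symm_conj {R E : Type*} [CommRing R] [AddCommGroup E]
    [Module R E] {p q : Submodule R E} (h : IsCompl p q) (f : Module.End R E)
    (hp : ∀ x ∈ p, f x ∈ p) (hq : ∀ x ∈ q, f x ∈ q) :
    (p.prodEquivOfIsCompl q h).symm.conj f = (f.restrict hp).prodMap (f.restrict hq) := by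
  apply LinearMap.prod_ext <;> ext x <;> simp [LinearEquiv.conj_apply, hp, hq]

lemma LinearMap.toMatrix_basis_map {R M N ι : Type*} [CommRing R] [AddCommGroup M] [Module R M]
    [AddCommGroup N] [Module R N] [Fintype ι] [DecidableEq ι] (b : Basis ι R M) (e : M ≃ₗ[R] N)
    (f : Module.End R N) :
    LinearMap.toMatrix (b.map e) (b.map e) f = LinearMap.toMatrix b b (e.symm.conj f) := by
  ext
  simp [LinearMap.toMatrix_apply, LinearEquiv.conj_apply]

lemma LinearMap.toMatrix_basis_reindex {R M N ι κ ι' κ' : Type*} [CommRing R] [AddCommGroup M]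
    [Module R M] [AddCommGroup N] [Module R N] [Fintype ι] [DecidableEq ι] [Fintype ι']
    [DecidableEq ι'] [Fintype κ] [Fintype κ'] (b₁ : Basis ι R M) (b₂ : Basis κ R N) (e₁ : ι ≃ ι')
    (e₂ : κ ≃ κ') (f : M →ₗ[R] N) :
    LinearMap.toMatrix (b₁.reindex e₁) (b₂.reindex e₂) f =
      reindex e₂ e₁ (LinearMap.toMatrix b₁ b₂ f) := by
  ext
  simp [LinearMap.toMatrix_apply]

theorem Module.End.exists_basis_toMatrix_eq_fromBlocks {K V : Type*} [Field K] [AddCommGroup V]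
    [Module K V] [FiniteDimensional K V] (f : End K V) :
    ∃ (d q : ℕ) (b : Basis (Fin d ⊕ Fin q) K V) (M₁ : Matrix (Fin d) (Fin d) K)
      (M₀ : Matrix (Fin q) (Fin q) K),
      IsUnit M₁ ∧ IsNilpotent M₀ ∧ LinearMap.toMatrix b b f = fromBlocks M₁ 0 0 M₀ := by
  obtain ⟨k, hk, hcompl⟩ :=
    ((Filter.eventually_ne_atTop 0).and f.eventually_isCompl_ker_pow_range_pow).exists
  let bR := Module.finBasis K (LinearMap.range (f ^ k))
  let bK := Module.finBasis K (LinearMap.ker (f ^ k))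
  refine ⟨_, _, (bR.prod bK).map (Submodule.prodEquivOfIsCompl _ _ hcompl.symm), _, _,
    (LinearMap.isUnit_toMatrix_iff bR).mpr (f.isUnit_restrict_range_pow hk hcompl.disjoint),
    (LinearMap.isNilpotent_toMatrix_iff bK _).mpr (f.isNilpotent_restrict_ker_pow k), ?_⟩
  rw [LinearMap.toMatrix_basis_map, Submodule.prodEquivOfIsCompl_symm_conj _ _
    (f.apply_mem_range_pow k) (f.apply_mem_ker_pow k), LinearMap.toMatrix_prodMap]

namespace Matrix

variable {ι R : Type*} [Fintype ι] [DecidableEq ι] [CommRing R]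

lemma inv_basisFun_toMatrix_mul_mul (b : Basis ι R (ι → R)) (M : Matrix ι ι R) :
    ((Pi.basisFun R ι).toMatrix b)⁻¹ * M * (Pi.basisFun R ι).toMatrix b =
      LinearMap.toMatrix b b (toLin' M) := by
  rw [inv_eq_left_inv (b.toMatrix_mul_toMatrix_flip (Pi.basisFun R ι))]
  conv_lhs => rw [← LinearMap.toMatrix'_toLin' M, ← LinearMap.toMatrix_eq_toMatrix']
  exact basis_toMatrix_mul_linearMap_toMatrix_mul_basis_toMatrix _ _ _ _ _

lemma inv_mul_eq_one_sub_smul_inv_mul {A B : Matrix ι ι R} {l : R} (h : IsUnit (l • A + B).det) :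
    (l • A + B)⁻¹ * B = 1 - l • ((l • A + B)⁻¹ * A) := by
  rw [eq_sub_iff_add_eq', ← Matrix.mul_smul, ← Matrix.mul_add, nonsing_inv_mul _ h]

lemma inv_mul_one_sub_smul_mul {S M : Matrix ι ι R} (h : IsUnit S.det) (l : R) :
    S⁻¹ * (1 - l • M) * S = 1 - l • (S⁻¹ * M * S) := by
  rw [Matrix.mul_sub, Matrix.sub_mul, Matrix.mul_one, nonsing_inv_mul _ h, Matrix.mul_smul,
    Matrix.smul_mul]

variable {m p : Type*} [Fintype m] [DecidableEq m] [Fintype p] [DecidableEq p]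

lemma exists_mul_fromBlocks_eq {M₁ : Matrix m m R} {M₀ : Matrix p p R} (hM₁ : IsUnit M₁)
    (hM₀ : IsNilpotent M₀) (l : R) :
    ∃ D : Matrix (m ⊕ p) (m ⊕ p) R, IsUnit D ∧ ∃ (J : Matrix m m R) (N : Matrix p p R),
      IsNilpotent N ∧ D * fromBlocks M₁ 0 0 M₀ = fromBlocks 1 0 0 N ∧
        D * (1 - l • fromBlocks M₁ 0 0 M₀) = fromBlocks J 0 0 1 := by
  have hU : IsUnit (1 - l • M₀) := (hM₀.smul l).isUnit_one_sub
  have hdet₁ := (isUnit_iff_isUnit_det M₁).mp hM₁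
  have hdet₀ := (isUnit_iff_isUnit_det _).mp hU
  have hcomm : Commute (1 - l • M₀)⁻¹ M₀ := by
    rw [← hU.unit_spec, ← coe_units_inv]
    exact ((Commute.one_left M₀).sub_left ((Commute.refl M₀).smul_left l)).units_inv_left
  refine ⟨fromBlocks M₁⁻¹ 0 0 (1 - l • M₀)⁻¹, ?_, M₁⁻¹ * (1 - l • M₁), (1 - l • M₀)⁻¹ * M₀,
    hcomm.isNilpotent_mul_left hM₀, ?_, ?_⟩
  · rw [isUnit_iff_isUnit_det, det_fromBlocks_zero₁₂]
    exact (isUnit_nonsing_inv_det _ hdet₁).mul (isUnit_nonsing_inv_det _ hdet₀)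
  · simp [fromBlocks_multiply, nonsing_inv_mul _ hdet₁]
  · have hblock : 1 - l • fromBlocks M₁ 0 0 M₀ = fromBlocks (1 - l • M₁) 0 0 (1 - l • M₀) := by
      rw [← fromBlocks_one, fromBlocks_smul, sub_eq_add_neg, fromBlocks_neg, fromBlocks_add]
      simp [sub_eq_add_neg]
    rw [hblock, fromBlocks_multiply]
    simp [nonsing_inv_mul _ hdet₀]

end Matrix

/-- **Weierstrass–Kronecker canonical form.** If `(A, B)` is a regular matrix pencil
(i.e. `det (l • A + B) ≠ 0` for some real `l`), then there are invertible matrices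
`P, Q` and `d + q = n` such that `P * A * Q = blockdiag (I_d, N)` and
`P * B * Q = blockdiag (J, I_q)` with `N` nilpotent. -/
theorem kronecker_canonical_form {n : ℕ} (A B : Matrix (Fin n) (Fin n) ℝ)
    (hreg : ∃ l : ℝ, (l • A + B).det ≠ 0) :
    ∃ (d q : ℕ) (h : d + q = n) (P Q : Matrix (Fin n) (Fin n) ℝ),
      IsUnit P ∧ IsUnit Q ∧
      ∃ (J : Matrix (Fin d) (Fin d) ℝ) (N : Matrix (Fin q) (Fin q) ℝ),
        IsNilpotent N ∧
        P * A * Q =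
          Matrix.reindex (finSumFinEquiv.trans (finCongr h)) (finSumFinEquiv.trans (finCongr h))
            (Matrix.fromBlocks (1 : Matrix (Fin d) (Fin d) ℝ) 0 0 N) ∧
        P * B * Q =
          Matrix.reindex (finSumFinEquiv.trans (finCongr h)) (finSumFinEquiv.trans (finCongr h))
            (Matrix.fromBlocks J 0 0 (1 : Matrix (Fin q) (Fin q) ℝ)) := by
  obtain ⟨l, hl⟩ := hreg
  set T := l • A + B
  have hT : IsUnit T.det := hl.isUnit
  obtain ⟨d, q, b, M₁, M₀, hM₁, hM₀, hb⟩ :=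
    Module.End.exists_basis_toMatrix_eq_fromBlocks (toLin' (T⁻¹ * A))
  have h : d + q = n := by simpa using (Module.finrank_eq_card_basis b).symm
  set e := finSumFinEquiv.trans (finCongr h)
  set φ := reindexAlgEquiv ℝ ℝ e
  set S := (Pi.basisFun ℝ (Fin n)).toMatrix (b.reindex e)
  have hS : IsUnit S :=
    letI := (Pi.basisFun ℝ (Fin n)).invertibleToMatrix (b.reindex e)
    isUnit_of_invertible S
  have hsim : S⁻¹ * (T⁻¹ * A) * S = φ (fromBlocks M₁ 0 0 M₀) := by
    rw [inv_basisFun_toMatrix_mul_mul, LinearMap.toMatrix_basis_reindex, hb, coe_reindexAlgEquiv]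
  obtain ⟨D, hD, J, N, hN, hDA, hDB⟩ := exists_mul_fromBlocks_eq hM₁ hM₀ l
  have hTB : T⁻¹ * B = 1 - l • (T⁻¹ * A) := inv_mul_eq_one_sub_smul_inv_mul hT
  refine ⟨d, q, h, φ D * S⁻¹ * T⁻¹, S, ?_, hS, J, N, hN, ?_, ?_⟩
  · exact ((hD.map φ).mul (isUnit_nonsing_inv_iff.mpr hS)).mul
      (isUnit_nonsing_inv_iff.mpr ((isUnit_iff_isUnit_det T).mpr hT))
  · calc φ D * S⁻¹ * T⁻¹ * A * S = φ D * (S⁻¹ * (T⁻¹ * A) * S) := by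
          simp only [Matrix.mul_assoc]
      _ = φ (fromBlocks 1 0 0 N) := by rw [hsim, ← map_mul, hDA]
  · calc φ D * S⁻¹ * T⁻¹ * B * S = φ D * (S⁻¹ * (1 - l • (T⁻¹ * A)) * S) := by
          rw [← hTB]; simp only [Matrix.mul_assoc]
      _ = φ (fromBlocks J 0 0 1) := by
        rw [inv_mul_one_sub_smul_mul ((isUnit_iff_isUnit_det S).mp hS), hsim, ← hDB, map_mul,
          map_sub, map_one, map_smul]
end

section
/- Let N be a nilpotent q×q real matrix and let c be a q-tuple of distributions on (0,∞). Then the q-tuple v of distributions defined by ⟨v,φ⟩ = Σ_{k=0}^{q−1} N^k·⟨c,φ^{(k)}⟩ (for every test function φ, where φ^{(k)} is the k-th derivative) is a solution of N·v̇ + v = c, and it is the unique q-tuple of distributions solving this system (no additional initial condition is needed). In particular, when N is the q×q upper-shift matrix (ones on the superdiagonal, zeros elsewhere), the solution is ⟨v_j,φ⟩ = Σ_{k=j}^{q} ⟨c_k, φ^{(k−j)}⟩ for j = 1,…,q. -/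
open MeasureTheory Function
open scoped ContDiff

/-- A test function on `(0,∞)`: smooth, compactly supported, with support in `(0,∞)`. -/
def IsTestFunction (φ : ℝ → ℝ) : Prop :=
  ContDiff ℝ ∞ φ ∧ HasCompactSupport φ ∧ tsupport φ ⊆ Set.Ioi (0 : ℝ)

/-- The space of test functions on `(0,∞)`, as a submodule of `ℝ → ℝ`. -/
def TestFun : Submodule ℝ (ℝ → ℝ) where
  carrier := {φ | IsTestFunction φ}
  add_mem' := by
    rintro f g ⟨hf1, hf2, hf3⟩ ⟨hg1, hg2, hg3⟩
    refine ⟨hf1.add hg1, hf2.add hg2, ?_⟩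
    calc tsupport (f + g) ⊆ closure (support f ∪ support g) :=
          closure_mono (support_add f g)
      _ = tsupport f ∪ tsupport g := closure_union ..
      _ ⊆ Set.Ioi 0 := Set.union_subset hf3 hg3
  zero_mem' := by
    refine ⟨contDiff_const, ?_, ?_⟩
    · simpa [HasCompactSupport, tsupport, Function.support] using isCompact_empty
    · simp [tsupport, Function.support]
  smul_mem' := by
    rintro c f ⟨hf1, hf2, hf3⟩
    refine ⟨hf1.const_smul c, hf2.mono' ((support_const_smul_subset c f).trans subset_closure), ?_⟩
    exact subset_trans (closure_mono (support_const_smul_subset c f)) hf3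

/-- A distribution on `(0,∞)`: a linear functional on test functions. -/
abbrev Distribution' : Type := TestFun →ₗ[ℝ] ℝ

lemma IsTestFunction.deriv {φ : ℝ → ℝ} (h : IsTestFunction φ) : IsTestFunction (_root_.deriv φ) := by
  obtain ⟨h1, h2, h3⟩ := h
  refine ⟨(contDiff_infty_iff_deriv.mp h1).2, h2.deriv, ?_⟩
  exact subset_trans (closure_minimal support_deriv_subset (isClosed_tsupport φ)) h3

/-- Derivative of a test function, as a test function. -/
noncomputable def tderiv (φ : TestFun) : TestFun := ⟨_root_.deriv φ.1, φ.2.deriv⟩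

/-- `v` solves the purely algebraic system `N v̇ + v = c` in the distributional sense. -/
def SolvesAlg {q : ℕ} (N : Matrix (Fin q) (Fin q) ℝ) (c v : Fin q → Distribution') : Prop :=
  ∀ φ : TestFun,
    N.mulVec (fun i => -(v i (tderiv φ))) + (fun i => v i φ) = fun i => c i φ

/-! Writing `V φ` for the vector `(⟨v i, φ⟩)ᵢ`, the system reads `V φ = C φ + N (V φ')`.
Substituting it into itself `m` times gives
`V φ = ∑_{k<m} Nᵏ C φ⁽ᵏ⁾ + Nᵐ V φ⁽ᵐ⁾`, and `N ^ q = 0` because the characteristic polynomial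
of a nilpotent matrix is `X ^ q`; with `m = q` this forces the formula, hence uniqueness.
Conversely the truncated Neumann series `∑_{k<q} Nᵏ C φ⁽ᵏ⁾` satisfies the relation by shifting
the summation index, again because `N ^ q = 0`. For the upper shift, `(Nᵏ)ᵢⱼ = [i + k = j]`. -/

open Finset Matrix

theorem Matrix.pow_card_eq_zero_of_isNilpotent {n R : Type*} [Fintype n] [DecidableEq n]
    [CommRing R] [IsDomain R] {N : Matrix n n R} (hN : IsNilpotent N) :
    N ^ Fintype.card n = 0 := by
  have hcharpoly : N.charpoly = Polynomial.X ^ Fintype.card n :=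
    sub_eq_zero.mp (isNilpotent_charpoly_sub_pow_of_isNilpotent hN).eq_zero
  simpa [hcharpoly] using N.aeval_self_charpoly

section NeumannSeries

variable {X ι R : Type*} [Fintype ι] [DecidableEq ι] [Semiring R]
  {N : Matrix ι ι R} {T : X → X} {f : X → ι → R}

theorem eq_sum_pow_mulVec_add_of_eq_add_mulVec {u : X → ι → R}
    (hu : ∀ x, u x = f x + N *ᵥ u (T x)) (m : ℕ) (x : X) :
    u x = ∑ k ∈ range m, N ^ k *ᵥ f (T^[k] x) + N ^ m *ᵥ u (T^[m] x) := by
  induction m with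
  | zero => simp
  | succ m ih =>
    rw [ih, hu (T^[m] x), mulVec_add, mulVec_mulVec, ← pow_succ, sum_range_succ, add_assoc,
      ← iterate_succ_apply' T]

theorem sum_pow_mulVec_eq_add_mulVec {m : ℕ} (hN : N ^ m = 0) (x : X) :
    ∑ k ∈ range m, N ^ k *ᵥ f (T^[k] x) =
      f x + N *ᵥ ∑ k ∈ range m, N ^ k *ᵥ f (T^[k] (T x)) := by
  cases m with
  | zero =>
    have hf : f x = 0 := by rw [← one_mulVec (f x), ← pow_zero N, hN, zero_mulVec]
    simp [hf]
  | succ m =>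
    simp only [mulVec_sum, mulVec_mulVec, ← pow_succ', ← iterate_succ_apply]
    rw [sum_range_succ', sum_range_succ _ m, hN, zero_mulVec, add_zero, pow_zero, one_mulVec,
      iterate_zero_apply, add_comm]

end NeumannSeries

section UpperShift

variable (q : ℕ) (R : Type*) [Semiring R]

def upperShift : Matrix (Fin q) (Fin q) R :=
  Matrix.of fun i j => if (i : ℕ) + 1 = j then 1 else 0

variable {q R}

theorem upperShift_pow_apply (k : ℕ) (i j : Fin q) :
    (upperShift q R ^ k) i j = if (i : ℕ) + k = j then 1 else 0 := by
  induction k generalizing j with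
  | zero => simp [one_apply, Fin.ext_iff]
  | succ k ih =>
    rw [pow_succ, mul_apply]
    simp only [ih, ite_mul, one_mul, zero_mul]
    by_cases h : (i : ℕ) + k < q
    · rw [sum_eq_single ⟨(i : ℕ) + k, h⟩ (fun l _ hl => if_neg fun e => hl (Fin.ext e.symm))
        (by simp), if_pos rfl]
      simp only [upperShift, of_apply, add_assoc]
    · rw [if_neg (by omega)]
      exact sum_eq_zero fun l _ => if_neg (by omega)

theorem sum_upperShift_pow_mulVec_apply (w : ℕ → Fin q → R) (i : Fin q) :
    (∑ k ∈ range q, upperShift q R ^ k *ᵥ w k) i =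
      ∑ j : Fin q, if i ≤ j then w ((j : ℕ) - i) j else 0 := by
  simp only [Finset.sum_apply, mulVec, dotProduct, upperShift_pow_apply, ite_mul, one_mul,
    zero_mul]
  rw [sum_comm]
  refine sum_congr rfl fun j _ => ?_
  split_ifs with h
  · rw [sum_eq_single_of_mem ((j : ℕ) - i) (by simp; omega) fun k _ hk => if_neg (by omega),
      if_pos (by omega)]
  · exact sum_eq_zero fun k _ => if_neg (by rw [Fin.le_def] at h; omega)

end UpperShift

noncomputable def tderivₗ : TestFun →ₗ[ℝ] TestFun where
  toFun := tderiv
  map_add' φ ψ := Subtype.ext <| funext fun x =>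
    deriv_add (φ.2.1.differentiable (by simp) x) (ψ.2.1.differentiable (by simp) x)
  map_smul' r φ := Subtype.ext <| funext fun x =>
    deriv_const_smul r (φ.2.1.differentiable (by simp) x)

section AlgebraicSystem

variable {q : ℕ} {N : Matrix (Fin q) (Fin q) ℝ} {c v : Fin q → Distribution'}

theorem solvesAlg_iff : SolvesAlg N c v ↔
    ∀ φ, (fun i => v i φ) = (fun i => c i φ) + N *ᵥ fun i => v i (tderiv φ) :=
  forall_congr' fun φ => by
    rw [show (fun i => -v i (tderiv φ)) = -fun i => v i (tderiv φ) from rfl, mulVec_neg,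
      neg_add_eq_iff_eq_add, add_comm]

theorem SolvesAlg.apply_eq_sum (hN : N ^ q = 0) (hv : SolvesAlg N c v) (φ : TestFun) (i : Fin q) :
    v i φ = ∑ k ∈ range q, (N ^ k *ᵥ fun j => c j (tderiv^[k] φ)) i := by
  have h := eq_sum_pow_mulVec_add_of_eq_add_mulVec (solvesAlg_iff.mp hv) q φ
  rw [hN, zero_mulVec, add_zero] at h
  rw [congrFun h i, Finset.sum_apply]

theorem solvesAlg_of_apply_eq_sum (hN : N ^ q = 0)
    (hv : ∀ φ i, v i φ = ∑ k ∈ range q, (N ^ k *ᵥ fun j => c j (tderiv^[k] φ)) i) :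
    SolvesAlg N c v := by
  have hu : ∀ φ, (fun i => v i φ) = ∑ k ∈ range q, N ^ k *ᵥ fun j => c j (tderiv^[k] φ) :=
    fun φ => funext fun i => (hv φ i).trans (Finset.sum_apply ..).symm
  refine solvesAlg_iff.mpr fun φ => ?_
  simp only [hu]
  exact sum_pow_mulVec_eq_add_mulVec (f := fun φ j => c j φ) hN φ

variable (N c)

noncomputable def algSolution : Fin q → Distribution' :=
  fun i => ∑ k ∈ range q, ∑ j, (N ^ k) i j • (c j).comp (tderivₗ ^ k)

theorem algSolution_apply (φ : TestFun) (i : Fin q) :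
    algSolution N c i φ = ∑ k ∈ range q, (N ^ k *ᵥ fun j => c j (tderiv^[k] φ)) i := by
  simp [algSolution, mulVec, dotProduct, Module.End.pow_apply, tderivₗ]

end AlgebraicSystem

/-- For nilpotent `N`, the system `N v̇ + v = c` has the tuple given by
`⟨v,φ⟩ = ∑ₖ Nᵏ ⟨c, φ⁽ᵏ⁾⟩` as its unique distributional solution (no initial condition is
needed); in particular for the upper-shift matrix the solution is
`⟨v_j, φ⟩ = ∑_{k ≥ j} ⟨c_k, φ⁽ᵏ⁻ʲ⁾⟩`. -/
theorem algebraic_part_unique_solution {q : ℕ} (N : Matrix (Fin q) (Fin q) ℝ)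
    (hN : IsNilpotent N) (c : Fin q → Distribution') :
    (∀ v : Fin q → Distribution',
      (∀ (φ : TestFun) (i : Fin q),
        v i φ = ∑ k ∈ Finset.range q, ((N ^ k).mulVec (fun j => c j (tderiv^[k] φ))) i) →
      SolvesAlg N c v) ∧
    (∃! v : Fin q → Distribution', SolvesAlg N c v) ∧
    (∀ v : Fin q → Distribution', SolvesAlg N c v →
      ∀ (φ : TestFun) (i : Fin q),
        v i φ = ∑ k ∈ Finset.range q, ((N ^ k).mulVec (fun j => c j (tderiv^[k] φ))) i) ∧
    ((N = Matrix.of fun i j : Fin q => if (i : ℕ) + 1 = (j : ℕ) then (1 : ℝ) else 0) →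
      ∀ v : Fin q → Distribution', SolvesAlg N c v →
      ∀ (φ : TestFun) (i : Fin q),
        v i φ = ∑ k : Fin q, if i ≤ k then c k (tderiv^[(k : ℕ) - (i : ℕ)] φ) else 0) := by
  have hNq : N ^ q = 0 := by simpa using N.pow_card_eq_zero_of_isNilpotent hN
  refine ⟨fun v => solvesAlg_of_apply_eq_sum hNq,
    ⟨algSolution N c, solvesAlg_of_apply_eq_sum hNq (algSolution_apply N c), fun v hv =>
      funext fun i => LinearMap.ext fun φ =>
        (hv.apply_eq_sum hNq φ i).trans (algSolution_apply N c φ i).symm⟩,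
    fun v hv => hv.apply_eq_sum hNq, ?_⟩
  rintro rfl v hv φ i
  rw [hv.apply_eq_sum hNq, ← Finset.sum_apply]
  exact sum_upperShift_pow_mulVec_apply (fun k j => c j (tderiv^[k] φ)) i
end

section
/- Let J be a d×d real matrix, b a d-tuple of distributions on (0,∞), u⁰ ∈ ℝ^d, and let φ₀ be a test function with ∫₀^∞ φ₀(t)dt = 1 such that the d×d matrix M = ∫₀^∞ e^{−Jt}·φ₀(t) dt is invertible. Then there exists a unique d-tuple u of distributions on (0,∞) satisfying u̇ + J·u = b and ⟨u,φ₀⟩ = u⁰. -/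
open MeasureTheory Function
open scoped ContDiff

/-- `u` solves the linear differential system `u̇ + J u = b` in the distributional sense. -/
def SolvesODE {d : ℕ} (J : Matrix (Fin d) (Fin d) ℝ) (b u : Fin d → Distribution') : Prop :=
  ∀ φ : TestFun,
    (fun i => -(u i (tderiv φ))) + J.mulVec (fun i => u i φ) = fun i => b i φ

/-!
Testing `u̇ + J u = b` against a tuple `Φ` of test functions says `⟨u, L Φ⟩ = ⟨b, Φ⟩`, where
`L Φ = -Φ' + Jᵀ Φ` is the formal adjoint, and the initial condition prescribes `u` on the tuples
`c φ₀`, `c ∈ ℝᵈ`. Hence a unique solution exists as soon as every tuple is uniquely of the form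
`L Ψ + c φ₀`. The only solution of `L Ψ = Φ` vanishing near `0` is
`Ψ(t) = -e^{tJᵀ} ∫₀ᵗ e^{-sJᵀ} Φ(s) ds`, and it vanishes for large `t` exactly when the weight
`∫ e^{-sJᵀ} Φ(s) ds` is zero. Every `L Ψ` has weight zero and `c φ₀` has weight `Mᵀ c`, so
invertibility of `M` lets one choose `c` cancelling the weight of any `Φ`.
-/

open NormedSpace Matrix Set

lemma HasDerivAt.matrix_mulVec {m n : Type*} [Fintype n] {M : ℝ → Matrix m n ℝ}
    {M' : Matrix m n ℝ} {v : ℝ → n → ℝ} {v' : n → ℝ} {t : ℝ}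
    (hM : ∀ i j, HasDerivAt (fun s => M s i j) (M' i j) t) (hv : HasDerivAt v v' t) :
    HasDerivAt (fun s => M s *ᵥ v s) (M' *ᵥ v t + M t *ᵥ v') t := by
  refine hasDerivAt_pi.2 fun i => ?_
  simp only [Pi.add_apply, mulVec, dotProduct, ← Finset.sum_add_distrib]
  exact HasDerivAt.fun_sum fun j _ => (hM i j).mul (hasDerivAt_pi.1 hv j)

lemma contDiff_matrix_mulVec {n : Type*} [Fintype n] {M : ℝ → Matrix n n ℝ} {v : ℝ → n → ℝ}
    (hM : ∀ i j, ContDiff ℝ ∞ fun t => M t i j) (hv : ContDiff ℝ ∞ v) :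
    ContDiff ℝ ∞ fun t => M t *ᵥ v t :=
  contDiff_pi.2 fun i => ContDiff.sum fun j _ => (hM i j).mul (contDiff_pi.1 hv j)

section MatrixExp

variable {n : Type*} [Fintype n] [DecidableEq n]

lemma hasDerivAt_exp_smul_apply (A : Matrix n n ℝ) (t : ℝ) (i j : n) :
    HasDerivAt (fun s : ℝ => exp (s • A) i j) ((A * exp (t • A)) i j) t := by
  let _ : NormedRing (Matrix n n ℝ) := Matrix.linftyOpNormedRing
  let _ : NormedAlgebra ℝ (Matrix n n ℝ) := Matrix.linftyOpNormedAlgebra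
  exact (entryLinearMap ℝ ℝ i j).toContinuousLinearMap.hasFDerivAt.comp_hasDerivAt t
    (hasDerivAt_exp_smul_const' A t)

lemma contDiff_exp_smul_apply (A : Matrix n n ℝ) (i j : n) :
    ContDiff ℝ ∞ (fun t : ℝ => exp (t • A) i j) := by
  let _ : NormedRing (Matrix n n ℝ) := Matrix.linftyOpNormedRing
  let _ : NormedAlgebra ℝ (Matrix n n ℝ) := Matrix.linftyOpNormedAlgebra
  have h : ContDiff ℝ ∞ (fun t : ℝ => exp (t • A)) := contDiff_iff_contDiffAt.2 fun t =>
    (exp_analytic (𝕂 := ℝ) (t • A)).contDiffAt.comp t (contDiff_id.smul contDiff_const).contDiffAt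
  exact (entryLinearMap ℝ ℝ i j).toContinuousLinearMap.contDiff.comp h

lemma exp_smul_mul_exp_neg_smul (A : Matrix n n ℝ) (t : ℝ) :
    exp (t • A) * exp (-(t • A)) = 1 := by
  rw [← Matrix.exp_add_of_commute _ _ ((Commute.refl (t • A)).neg_right), add_neg_cancel,
    NormedSpace.exp_zero]

lemma mul_exp_smul_comm (A : Matrix n n ℝ) (t : ℝ) : A * exp (t • A) = exp (t • A) * A :=
  ((Commute.refl A).smul_right t).exp_right

end MatrixExp

theorem LinearMap.existsUnique_comp_eq_of_bijective {R M N P : Type*} [Semiring R]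
    [AddCommMonoid M] [AddCommMonoid N] [AddCommMonoid P] [Module R M] [Module R N] [Module R P]
    {f : M →ₗ[R] N} (hf : Bijective f) (g : M →ₗ[R] P) :
    ∃! h : N →ₗ[R] P, h ∘ₗ f = g := by
  let e := LinearEquiv.ofBijective f hf
  refine ⟨g ∘ₗ e.symm.toLinearMap, ?_, fun h hh => ?_⟩
  · ext x
    simp [e]
  · ext y
    obtain ⟨x, rfl⟩ := hf.2 y
    simp [← hh, e]

lemma exists_pos_subset_Icc_of_isCompact {K : Set ℝ} (hK : IsCompact K) (hpos : K ⊆ Ioi 0) :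
    ∃ a b, 0 < a ∧ K ⊆ Icc a b := by
  have hK' : IsCompact (insert 1 K) := hK.insert 1
  refine ⟨sInf (insert 1 K), sSup (insert 1 K),
    insert_subset (zero_lt_one' ℝ) hpos (hK'.sInf_mem (insert_nonempty 1 K)), fun t ht => ?_⟩
  exact ⟨csInf_le hK'.bddBelow (mem_insert_of_mem 1 ht),
    le_csSup hK'.bddAbove (mem_insert_of_mem 1 ht)⟩

section TestFunctions

lemma hasDerivAt_testFun (φ : TestFun) (t : ℝ) :
    HasDerivAt (φ : ℝ → ℝ) (deriv (φ : ℝ → ℝ) t) t :=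
  ((φ.2.1.differentiable (by simp)) t).hasDerivAt

lemma tderiv_add (φ ψ : TestFun) : tderiv (φ + ψ) = tderiv φ + tderiv ψ :=
  Subtype.ext <| funext fun t => ((hasDerivAt_testFun φ t).add (hasDerivAt_testFun ψ t)).deriv

lemma tderiv_smul (c : ℝ) (φ : TestFun) : tderiv (c • φ) = c • tderiv φ :=
  Subtype.ext <| funext fun t => ((hasDerivAt_testFun φ t).const_smul c).deriv

@[simp]
lemma tderiv_zero : tderiv 0 = 0 := by
  simpa using tderiv_smul 0 0

lemma IsTestFunction.of_eq_zero_of_notMem_Icc {ψ : ℝ → ℝ} {a b : ℝ} (hψ : ContDiff ℝ ∞ ψ)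
    (ha : 0 < a) (hzero : ∀ t ∉ Icc a b, ψ t = 0) : IsTestFunction ψ := by
  have hsupp : tsupport ψ ⊆ Icc a b :=
    closure_minimal (fun t ht => by_contra fun h => ht (hzero t h)) isClosed_Icc
  exact ⟨hψ, HasCompactSupport.intro isCompact_Icc hzero,
    hsupp.trans fun t ht => ha.trans_le ht.1⟩

end TestFunctions

namespace DistribODE

section Tuples

variable {n : Type*}

def tupleVal (Φ : n → TestFun) (t : ℝ) : n → ℝ := fun k => (Φ k : ℝ → ℝ) t

lemma exists_tupleVal_eq_zero_of_notMem_Icc [Finite n] (Φ : n → TestFun) :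
    ∃ a b, 0 < a ∧ ∀ t ∉ Icc a b, tupleVal Φ t = 0 := by
  obtain ⟨a, b, ha, hab⟩ := exists_pos_subset_Icc_of_isCompact
    (isCompact_iUnion fun k => (Φ k).2.2.1) (iUnion_subset fun k => (Φ k).2.2.2)
  refine ⟨a, b, ha, fun t ht => funext fun k => ?_⟩
  exact image_eq_zero_of_notMem_tsupport (f := (Φ k : ℝ → ℝ)) fun hk =>
    ht (hab (mem_iUnion_of_mem k hk))

lemma contDiff_tupleVal [Fintype n] (Φ : n → TestFun) : ContDiff ℝ ∞ (tupleVal Φ) :=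
  contDiff_pi.2 fun k => (Φ k).2.1

@[simp]
lemma tupleVal_zero (t : ℝ) : tupleVal (0 : n → TestFun) t = 0 := rfl

lemma tupleVal_add (Φ Ψ : n → TestFun) (t : ℝ) :
    tupleVal (Φ + Ψ) t = tupleVal Φ t + tupleVal Ψ t := rfl

lemma tupleVal_smul (c : ℝ) (Φ : n → TestFun) (t : ℝ) :
    tupleVal (c • Φ) t = c • tupleVal Φ t := rfl

lemma tuple_ext {Φ Ψ : n → TestFun} (h : ∀ t, tupleVal Φ t = tupleVal Ψ t) : Φ = Ψ :=
  funext fun k => Subtype.ext <| funext fun t => congrFun (h t) k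

lemma hasDerivAt_tupleVal (Φ : n → TestFun) (t : ℝ) :
    HasDerivAt (tupleVal Φ) (tupleVal (fun k => tderiv (Φ k)) t) t :=
  hasDerivAt_pi.2 fun k => hasDerivAt_testFun (Φ k) t

end Tuples

section DualOperator

variable {n : Type*} [Fintype n] (A : Matrix n n ℝ)

noncomputable def dualOp : (n → TestFun) →ₗ[ℝ] (n → TestFun) where
  toFun Ψ j := -tderiv (Ψ j) + ∑ i, A j i • Ψ i
  map_add' Ψ Φ := by
    ext j : 1
    simp only [Pi.add_apply, tderiv_add, smul_add, Finset.sum_add_distrib]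
    abel
  map_smul' c Ψ := by
    ext j : 1
    simp only [Pi.smul_apply, tderiv_smul, smul_comm (A j _) c, ← Finset.smul_sum,
      RingHom.id_apply, smul_add, smul_neg]

lemma tupleVal_dualOp (Ψ : n → TestFun) (t : ℝ) :
    tupleVal (dualOp A Ψ) t = A *ᵥ tupleVal Ψ t - tupleVal (fun k => tderiv (Ψ k)) t := by
  ext j
  simp only [tupleVal, dualOp, LinearMap.coe_mk, AddHom.coe_mk, Submodule.coe_add,
    NegMemClass.coe_neg, AddSubmonoidClass.coe_finsetSum, SetLike.val_smul, Pi.add_apply,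
    Pi.neg_apply, Finset.sum_apply, Pi.smul_apply, smul_eq_mul, Pi.sub_apply, mulVec, dotProduct]
  ring

variable [DecidableEq n]

noncomputable def twist (Φ : n → TestFun) (t : ℝ) : n → ℝ := exp (-(t • A)) *ᵥ tupleVal Φ t

lemma exp_smul_mulVec_twist (Φ : n → TestFun) (t : ℝ) :
    exp (t • A) *ᵥ twist A Φ t = tupleVal Φ t := by
  rw [twist, mulVec_mulVec, exp_smul_mul_exp_neg_smul, one_mulVec]

lemma contDiff_twist (Φ : n → TestFun) : ContDiff ℝ ∞ (twist A Φ) := by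
  refine contDiff_matrix_mulVec (fun i j => ?_) (contDiff_tupleVal Φ)
  simpa only [smul_neg] using contDiff_exp_smul_apply (-A) i j

lemma integrable_twist (Φ : n → TestFun) : Integrable (twist A Φ) := by
  obtain ⟨a, b, -, hzero⟩ := exists_tupleVal_eq_zero_of_notMem_Icc Φ
  refine (contDiff_twist A Φ).continuous.integrable_of_hasCompactSupport ?_
  exact HasCompactSupport.intro isCompact_Icc fun t ht => by rw [twist, hzero t ht, mulVec_zero]

lemma hasDerivAt_twist (Ψ : n → TestFun) (t : ℝ) :
    HasDerivAt (twist A Ψ) (-twist A (dualOp A Ψ) t) t := by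
  have hexp (i j : n) : HasDerivAt (fun s : ℝ => exp (-(s • A)) i j)
      ((-A * exp (-(t • A))) i j) t := by
    simpa only [smul_neg] using hasDerivAt_exp_smul_apply (-A) t i j
  refine (HasDerivAt.matrix_mulVec hexp (hasDerivAt_tupleVal Ψ t)).congr_deriv ?_
  rw [twist, tupleVal_dualOp, mulVec_sub, mulVec_mulVec, ← smul_neg, mul_exp_smul_comm, mul_neg,
    neg_mulVec]
  abel

noncomputable def weight : (n → TestFun) →ₗ[ℝ] (n → ℝ) where
  toFun Φ := ∫ t, twist A Φ t
  map_add' Φ Ψ := by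
    rw [← integral_add (integrable_twist A Φ) (integrable_twist A Ψ)]
    simp only [twist, tupleVal_add, mulVec_add]
  map_smul' c Φ := by
    rw [RingHom.id_apply, ← integral_smul]
    simp only [twist, tupleVal_smul, mulVec_smul]

lemma weight_dualOp (Ψ : n → TestFun) : weight A (dualOp A Ψ) = 0 := by
  have h := integral_eq_zero_of_hasDerivAt_of_integrable (hasDerivAt_twist A Ψ)
    (integrable_twist A (dualOp A Ψ)).neg (integrable_twist A Ψ)
  rwa [integral_neg, neg_eq_zero] at h

lemma dualOp_injective : Injective (dualOp A) := by
  refine (injective_iff_map_eq_zero _).2 fun Ψ hΨ => ?_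
  obtain ⟨a, b, ha, hzero⟩ := exists_tupleVal_eq_zero_of_notMem_Icc Ψ
  have hconst : ∀ x y, twist A Ψ x = twist A Ψ y :=
    is_const_of_deriv_eq_zero (fun t => (hasDerivAt_twist A Ψ t).differentiableAt)
      (fun t => by rw [(hasDerivAt_twist A Ψ t).deriv, hΨ]; simp [twist])
  refine tuple_ext fun t => ?_
  rw [← exp_smul_mulVec_twist A Ψ t, hconst t 0, twist, hzero 0 fun h => ha.not_ge h.1]
  simp

noncomputable def primitive (Φ : n → TestFun) (t : ℝ) : n → ℝ :=
  -(exp (t • A) *ᵥ ∫ s in 0..t, twist A Φ s)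

lemma hasDerivAt_integral_twist (Φ : n → TestFun) (t : ℝ) :
    HasDerivAt (fun t => ∫ s in 0..t, twist A Φ s) (twist A Φ t) t :=
  ((contDiff_twist A Φ).continuous.integral_hasStrictDerivAt 0 t).hasDerivAt

lemma hasDerivAt_primitive (Φ : n → TestFun) (t : ℝ) :
    HasDerivAt (primitive A Φ) (A *ᵥ primitive A Φ t - tupleVal Φ t) t := by
  refine (HasDerivAt.matrix_mulVec (hasDerivAt_exp_smul_apply A t)
    (hasDerivAt_integral_twist A Φ t)).neg.congr_deriv ?_
  rw [exp_smul_mulVec_twist, primitive, mulVec_neg, mulVec_mulVec]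
  abel

lemma contDiff_primitive (Φ : n → TestFun) : ContDiff ℝ ∞ (primitive A Φ) := by
  have hint : ContDiff ℝ ∞ fun t => ∫ s in 0..t, twist A Φ s := by
    refine contDiff_infty_iff_deriv.2
      ⟨fun t => (hasDerivAt_integral_twist A Φ t).differentiableAt, ?_⟩
    rw [funext fun t => (hasDerivAt_integral_twist A Φ t).deriv]
    exact contDiff_twist A Φ
  exact (contDiff_matrix_mulVec (contDiff_exp_smul_apply A) hint).neg

/-- Left of the support of `Φ` the integral `∫₀ᵗ` sees nothing of `twist A Φ`, right of it
the integral is the whole weight. -/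
lemma primitive_eq_zero_of_notMem_Icc {Φ : n → TestFun} (hΦ : weight A Φ = 0) {a b t : ℝ}
    (ha : 0 < a) (hzero : ∀ s ∉ Icc a b, tupleVal Φ s = 0) (ht : t ∉ Icc a b) :
    primitive A Φ t = 0 := by
  have htwist : ∀ s ∉ Icc a b, twist A Φ s = 0 := fun s hs => by
    rw [twist, hzero s hs, mulVec_zero]
  suffices ∫ s in 0..t, twist A Φ s = 0 by rw [primitive, this, mulVec_zero, neg_zero]
  rcases lt_or_ge t a with hta | hat
  · refine intervalIntegral.integral_zero_ae (Filter.Eventually.of_forall fun s hs => htwist s ?_)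
    rcases mem_uIoc.1 hs with hs | hs <;> exact fun h => by linarith [h.1]
  · have htb : b < t := lt_of_not_ge fun h => ht ⟨hat, h⟩
    rw [intervalIntegral.integral_of_le (ha.le.trans hat),
      setIntegral_eq_integral_of_forall_compl_eq_zero fun s hs => htwist s ?_]
    · exact hΦ
    · rw [mem_Ioc, not_and_or, not_lt, not_le] at hs
      rcases hs with hs | hs <;> exact fun h => by linarith [h.1, h.2]

lemma exists_dualOp_eq {Φ : n → TestFun} (hΦ : weight A Φ = 0) : ∃ Ψ, dualOp A Ψ = Φ := by
  obtain ⟨a, b, ha, hzero⟩ := exists_tupleVal_eq_zero_of_notMem_Icc Φ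
  let Ψ : n → TestFun := fun k =>
    ⟨fun t => primitive A Φ t k, IsTestFunction.of_eq_zero_of_notMem_Icc
      (contDiff_pi.1 (contDiff_primitive A Φ) k) ha fun t ht => by
        rw [primitive_eq_zero_of_notMem_Icc A hΦ ha hzero ht, Pi.zero_apply]⟩
  refine ⟨Ψ, tuple_ext fun t => ?_⟩
  have hderiv : tupleVal (fun k => tderiv (Ψ k)) t = A *ᵥ primitive A Φ t - tupleVal Φ t :=
    (hasDerivAt_tupleVal Ψ t).unique (hasDerivAt_primitive A Φ t)
  have hΨ : tupleVal Ψ = primitive A Φ := rfl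
  rw [tupleVal_dualOp, hderiv, hΨ, sub_sub_cancel]

noncomputable def constTuple (φ₀ : TestFun) : (n → ℝ) →ₗ[ℝ] (n → TestFun) :=
  (LinearMap.toSpanSingleton ℝ TestFun φ₀).compLeft n

noncomputable def weightMatrix (φ₀ : TestFun) : Matrix n n ℝ :=
  of fun j k => ∫ t, exp (-(t • A)) j k * (φ₀ : ℝ → ℝ) t

lemma weight_constTuple (φ₀ : TestFun) (c : n → ℝ) :
    weight A (constTuple φ₀ c) = weightMatrix A φ₀ *ᵥ c := by
  have hint (j k : n) :
      Integrable fun t => exp (-(t • A)) j k * (φ₀ : ℝ → ℝ) t := by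
    have hexp : Continuous fun t : ℝ => exp (-(t • A)) j k := by
      simpa only [smul_neg] using (contDiff_exp_smul_apply (-A) j k).continuous
    exact (hexp.mul φ₀.2.1.continuous).integrable_of_hasCompactSupport φ₀.2.2.1.mul_left
  have hval (t : ℝ) : tupleVal (constTuple φ₀ c) t = fun k => c k * (φ₀ : ℝ → ℝ) t := rfl
  ext j
  change (∫ t, twist A _ t) j = _
  rw [eval_integral (integrable_twist A _).eval]
  simp only [twist, hval, mulVec, dotProduct, weightMatrix, of_apply, mul_left_comm _ (c _)]
  rw [integral_finsetSum _ fun k _ => (hint j k).const_mul (c k)]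
  simp only [integral_const_mul, mul_comm]

lemma weightMatrix_transpose (φ₀ : TestFun) :
    weightMatrix Aᵀ φ₀ =
      (of fun i j => ∫ t in Ioi 0, exp (-(t • A)) i j * (φ₀ : ℝ → ℝ) t)ᵀ := by
  ext j k
  simp only [weightMatrix, of_apply, transpose_apply, ← transpose_smul, ← transpose_neg,
    exp_transpose]
  refine (setIntegral_eq_integral_of_forall_compl_eq_zero fun t ht => ?_).symm
  rw [image_eq_zero_of_notMem_tsupport fun h => ht (φ₀.2.2.2 h), mul_zero]

theorem bijective_dualOp_coprod_constTuple {φ₀ : TestFun} (hW : IsUnit (weightMatrix A φ₀)) :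
    Bijective ((dualOp A).coprod (constTuple φ₀)) := by
  refine ⟨(injective_iff_map_eq_zero _).2 fun ⟨Ψ, c⟩ h => ?_, fun Φ => ?_⟩
  · rw [LinearMap.coprod_apply] at h
    have hc : c = 0 := mulVec_injective_iff_isUnit.2 hW <| by
      simpa [weight_dualOp, weight_constTuple] using congrArg (weight A) h
    subst hc
    simp only [map_zero, add_zero] at h
    rw [dualOp_injective A (h.trans (map_zero _).symm), Prod.mk_zero_zero]
  · set c := (weightMatrix A φ₀)⁻¹ *ᵥ weight A Φ
    obtain ⟨Ψ, hΨ⟩ := exists_dualOp_eq A (Φ := Φ - constTuple φ₀ c) <| by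
      rw [map_sub, weight_constTuple, mulVec_mulVec,
        mul_nonsing_inv _ ((isUnit_iff_isUnit_det _).1 hW), one_mulVec, sub_self]
    exact ⟨(Ψ, c), by rw [LinearMap.coprod_apply, hΨ, sub_add_cancel]⟩

end DualOperator

section Distributions

variable {d : ℕ} (J : Matrix (Fin d) (Fin d) ℝ) (u : Fin d → Distribution')

lemma lsum_dualOp_single (i : Fin d) (φ : TestFun) :
    LinearMap.lsum ℝ (fun _ => TestFun) ℝ u (dualOp Jᵀ (Pi.single i φ))
      = -u i (tderiv φ) + (J *ᵥ fun j => u j φ) i := by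
  simp [dualOp, Pi.single_apply, mulVec, dotProduct, apply_ite,
    Finset.sum_add_distrib]

lemma solvesODE_iff (b : Fin d → Distribution') :
    SolvesODE J b u ↔
      LinearMap.lsum ℝ (fun _ => TestFun) ℝ u ∘ₗ dualOp Jᵀ = LinearMap.lsum ℝ _ ℝ b := by
  rw [LinearMap.pi_ext_iff]
  simp only [LinearMap.comp_apply, lsum_dualOp_single, LinearMap.lsum_piSingle]
  exact ⟨fun h i φ => congrFun (h φ) i, fun h φ => funext fun i => h i φ⟩

lemma initial_iff (φ₀ : TestFun) (u0 : Fin d → ℝ) :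
    (∀ i, u i φ₀ = u0 i) ↔
      LinearMap.lsum ℝ (fun _ => TestFun) ℝ u ∘ₗ constTuple φ₀ =
        Fintype.linearCombination ℝ u0 := by
  rw [LinearMap.pi_ext'_iff]
  simp_rw [LinearMap.ext_ring_iff]
  simp [constTuple, Pi.single_apply, apply_ite]

lemma solvesODE_and_initial_iff (b : Fin d → Distribution') (φ₀ : TestFun) (u0 : Fin d → ℝ) :
    (SolvesODE J b u ∧ ∀ i, u i φ₀ = u0 i) ↔
      LinearMap.lsum ℝ (fun _ => TestFun) ℝ u ∘ₗ (dualOp Jᵀ).coprod (constTuple φ₀) =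
        (LinearMap.lsum ℝ _ ℝ b).coprod (Fintype.linearCombination ℝ u0) := by
  rw [solvesODE_iff, initial_iff, LinearMap.prod_ext_iff, LinearMap.comp_assoc,
    LinearMap.comp_assoc, LinearMap.coprod_inl, LinearMap.coprod_inr, LinearMap.coprod_inl,
    LinearMap.coprod_inr]

end Distributions

end DistribODE

theorem differential_part_exists_unique_general {d : ℕ} (J : Matrix (Fin d) (Fin d) ℝ)
    (b : Fin d → Distribution') (u0 : Fin d → ℝ) (φ₀ : TestFun)
    (hM : IsUnit (Matrix.of fun i j : Fin d =>
      ∫ t in Set.Ioi (0 : ℝ), (NormedSpace.exp (-(t • J))) i j * φ₀.1 t)) :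
    ∃! u : Fin d → Distribution',
      SolvesODE J b u ∧ ∀ i, u i φ₀ = u0 i := by
  have hW : IsUnit (DistribODE.weightMatrix Jᵀ φ₀) := by
    rwa [DistribODE.weightMatrix_transpose, isUnit_transpose]
  exact ((LinearMap.lsum ℝ _ ℝ).toEquiv.existsUnique_congr
    (DistribODE.solvesODE_and_initial_iff J · b φ₀ u0)).2
      (LinearMap.existsUnique_comp_eq_of_bijective
        (DistribODE.bijective_dualOp_coprod_constTuple Jᵀ hW) _)

/-- Existence and uniqueness for the distributional initial value problem
`u̇ + J u = b`, `⟨u, φ₀⟩ = u⁰`, provided `∫₀^∞ e^{-Jt} φ₀(t) dt` is invertible. -/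
theorem differential_part_exists_unique {d : ℕ} (J : Matrix (Fin d) (Fin d) ℝ)
    (b : Fin d → Distribution') (u0 : Fin d → ℝ) (φ₀ : TestFun)
    (hφ₀ : ∫ t in Set.Ioi (0 : ℝ), φ₀.1 t = 1)
    (hM : IsUnit (Matrix.of fun i j : Fin d =>
      ∫ t in Set.Ioi (0 : ℝ), (NormedSpace.exp (-(t • J))) i j * φ₀.1 t)) :
    ∃! u : Fin d → Distribution',
      SolvesODE J b u ∧ ∀ i, u i φ₀ = u0 i :=
  differential_part_exists_unique_general J b u0 φ₀ hM
end

section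
/- Let d, q be natural numbers with d + q = n, let J be a d×d real matrix, N a nilpotent q×q real matrix, and set Ā = blockdiag(I_d, N) and B̄ = blockdiag(J, I_q). Let f be an n-tuple of distributions on (0,∞), u⁰ = (u⁰_1,…,u⁰_d) ∈ ℝ^d, and let φ₀ be a test function with ∫₀^∞ φ₀(t)dt = 1 such that the d×d matrix ∫₀^∞ e^{−Jt}·φ₀(t) dt is invertible. Then there exists a unique n-tuple y of distributions on (0,∞) solving Ā·ẏ + B̄·y = f and satisfying ⟨y_i, φ₀⟩ = u⁰_i for i = 1,…,d. -/
open MeasureTheory Function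
open scoped ContDiff

/-- A distribution on `(0,∞)`: a linear functional on test functions. -/
abbrev DistributionIoi : Type := TestFun →ₗ[ℝ] ℝ

/-- `x` solves the linear DAE `A ẋ + B x = f` in the distributional sense on `(0,∞)`. -/
def SolvesDAE {n : ℕ} (A B : Matrix (Fin n) (Fin n) ℝ) (f x : Fin n → DistributionIoi) : Prop :=
  ∀ φ : TestFun,
    A.mulVec (fun i => -(x i (tderiv φ))) + B.mulVec (fun i => x i φ) = fun i => f i φ


/-!
The system splits into its two blocks. On the nilpotent block it reads `(1 + N ∂) v = g`, where
`∂` is the distributional derivative; `N` acts entrywise and so commutes with `∂`, hence `N ∂` is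
nilpotent and `1 + N ∂` is invertible. On the regular block, multiplication by `e^{tJ}` conjugates
`∂ + J` into `∂`. On `(0,∞)` the derivative of distributions is onto and its kernel consists of the
multiples of `φ ↦ ∫ φ`: both follow from the fact that the primitive of `φ - (∫ φ) φ₀` is again a
test function. So the solutions of `u̇ + J u = g` form an affine space directed by the smooth
solutions `e^{-tJ} c`, and pairing `e^{-tJ} c` with `φ₀` gives `M c` with
`M = ∫₀^∞ e^{-Jt} φ₀(t) dt`, which is invertible by hypothesis.
-/

namespace Matrix

variable {ι R M : Type*} [Fintype ι] [DecidableEq ι] [CommSemiring R] [AddCommMonoid M] [Module R M]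

noncomputable def toEndPi : Matrix ι ι R →+* Module.End R (ι → M) :=
  (endVecRingEquivMatrixEnd ι R M).symm.toRingHom.comp (algebraMap R (Module.End R M)).mapMatrix

lemma toEndPi_apply (A : Matrix ι ι R) (y : ι → M) (i : ι) :
    toEndPi A y i = ∑ j, A i j • y j :=
  rfl

lemma commute_toEndPi_compLeft (A : Matrix ι ι R) (f : Module.End R M) :
    Commute (toEndPi A) (f.compLeft ι) := by
  ext y i
  simp [toEndPi_apply]

end Matrix

theorem LinearMap.existsUnique_of_ker_eq_range {R U V W X : Type*} [Ring R] [AddCommGroup U]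
    [AddCommGroup V] [AddCommGroup W] [AddCommGroup X] [Module R U] [Module R V] [Module R W]
    [Module R X] {L : V →ₗ[R] W} {I : V →ₗ[R] U} {K : X →ₗ[R] V} (hL : Surjective L)
    (hker : ker L = range K) (hIK : Bijective (I ∘ₗ K)) (g : W) (u₀ : U) :
    ∃! v, L v = g ∧ I v = u₀ := by
  obtain ⟨v₁, rfl⟩ := hL g
  obtain ⟨c, hc⟩ := hIK.surjective (u₀ - I v₁)
  have hLK : ∀ c, L (K c) = 0 := fun c => hker.ge ⟨c, rfl⟩
  refine ⟨v₁ + K c, ⟨by simp [hLK], by simpa using congrArg (I v₁ + ·) hc⟩, ?_⟩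
  rintro v ⟨hLv, hIv⟩
  obtain ⟨c', hc'⟩ : v - v₁ ∈ range K := hker ▸ by simp [hLv]
  obtain rfl : c' = c := hIK.injective (by simp [hc, hc', hIv])
  rw [hc']
  abel

theorem Fin.existsUnique_castAdd_natAdd {α : Type*} {d q : ℕ} {P : (Fin d → α) → Prop}
    {Q : (Fin q → α) → Prop} (hP : ∃! u, P u) (hQ : ∃! v, Q v) :
    ∃! y : Fin (d + q) → α, P (fun i => y (castAdd q i)) ∧ Q (fun j => y (natAdd d j)) := by
  obtain ⟨u, hu, hu'⟩ := hP
  obtain ⟨v, hv, hv'⟩ := hQ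
  refine ⟨append u v, by simpa only [append_left, append_right] using ⟨hu, hv⟩,
    fun y ⟨hPy, hQy⟩ => ?_⟩
  rw [← append_castAdd_natAdd (f := y), hu' _ hPy, hv' _ hQy]

namespace IsTestFunction

open Set

variable {φ : ℝ → ℝ}

lemma differentiable (hφ : IsTestFunction φ) : Differentiable ℝ φ :=
  hφ.1.differentiable (by simp)

lemma integrable (hφ : IsTestFunction φ) : Integrable φ :=
  hφ.1.continuous.integrable_of_hasCompactSupport hφ.2.1

lemma exists_tsupport_subset_Ioo (hφ : IsTestFunction φ) :
    ∃ a b, 0 < a ∧ tsupport φ ⊆ Ioo a b := by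
  obtain ⟨δ, hδ, hsub⟩ := hφ.2.1.isCompact.exists_cthickening_subset_open isOpen_Ioi hφ.2.2
  obtain ⟨b, hb⟩ := hφ.2.1.isCompact.bddAbove
  refine ⟨δ, b + 1, hδ, fun x hx => ⟨not_le.mp fun hxδ => ?_, (hb hx).trans_lt (lt_add_one b)⟩⟩
  have : (0 : ℝ) ∈ Metric.cthickening δ (tsupport φ) :=
    Metric.mem_cthickening_of_dist_le 0 x δ _ hx (by
      rwa [Real.dist_eq, zero_sub, abs_neg, abs_of_pos (hφ.2.2 hx)])
  exact lt_irrefl (0 : ℝ) (hsub this)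

lemma smooth_mul {g : ℝ → ℝ} (hg : ContDiff ℝ ∞ g) (hφ : IsTestFunction φ) :
    IsTestFunction (fun t => g t * φ t) := by
  have hsupp : support (fun t => g t * φ t) ⊆ tsupport φ :=
    (support_mul_subset_right g φ).trans subset_closure
  exact ⟨hg.mul hφ.1, hφ.2.1.mono' hsupp,
    (closure_minimal hsupp (isClosed_tsupport φ)).trans hφ.2.2⟩

end IsTestFunction

namespace DAE

open Set NormedSpace

section Derivative

noncomputable def tderivL : TestFun →ₗ[ℝ] TestFun where
  toFun := tderiv
  map_add' φ ψ := Subtype.ext <| funext fun x =>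
    deriv_add (φ.2.differentiable x) (ψ.2.differentiable x)
  map_smul' c φ := Subtype.ext <| funext fun x => deriv_const_smul c (φ.2.differentiable x)

noncomputable def ddt : Module.End ℝ DistributionIoi := -LinearMap.lcomp ℝ ℝ tderivL

lemma ddt_apply (T : DistributionIoi) (φ : TestFun) : ddt T φ = -T (tderiv φ) := rfl

noncomputable def integralIoi : TestFun →ₗ[ℝ] ℝ where
  toFun φ := ∫ t in Ioi 0, (φ : ℝ → ℝ) t
  map_add' φ ψ := integral_add φ.2.integrable.integrableOn ψ.2.integrable.integrableOn
  map_smul' c _ := integral_const_mul c _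

lemma integralIoi_apply (φ : TestFun) : integralIoi φ = ∫ t in Ioi 0, (φ : ℝ → ℝ) t := rfl

lemma integral_Ioi_eq_intervalIntegral {h : ℝ → ℝ} {b : ℝ} (hb : 0 ≤ b)
    (hzero : ∀ t, b < t → h t = 0) : ∫ t in Ioi 0, h t = ∫ t in 0..b, h t := by
  rw [intervalIntegral.integral_of_le hb]
  exact setIntegral_eq_of_subset_of_forall_sdiff_eq_zero measurableSet_Ioi Ioc_subset_Ioi_self
    fun t ht => hzero t (not_le.mp fun htb => ht.2 ⟨ht.1, htb⟩)

lemma integralIoi_tderiv (φ : TestFun) : integralIoi (tderiv φ) = 0 := by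
  obtain ⟨a, b, ha, hφ⟩ := φ.2.exists_tsupport_subset_Ioo
  have hzero : ∀ t ∉ Ioo a b, (φ : ℝ → ℝ) t = 0 := fun t ht =>
    image_eq_zero_of_notMem_tsupport fun h => ht (hφ h)
  have hR : max a b ∉ Ioo a b := fun h => h.2.not_ge (le_max_right a b)
  have hderiv : ∀ t, max a b < t → deriv (φ : ℝ → ℝ) t = 0 := fun t ht =>
    image_eq_zero_of_notMem_tsupport fun h =>
      (hφ (tsupport_deriv_subset h)).2.not_ge ((le_max_right a b).trans ht.le)
  change ∫ t in Ioi 0, deriv (φ : ℝ → ℝ) t = 0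
  rw [integral_Ioi_eq_intervalIntegral (ha.le.trans (le_max_left a b)) hderiv,
    intervalIntegral.integral_deriv_eq_sub (fun t _ => φ.2.differentiable t)
      ((tderiv φ).2.1.continuous.intervalIntegrable _ _),
    hzero _ hR, hzero 0 fun h => h.1.not_gt ha, sub_zero]

noncomputable def primitive : TestFun →ₗ[ℝ] (ℝ → ℝ) where
  toFun φ x := ∫ t in 0..x, (φ : ℝ → ℝ) t
  map_add' φ ψ := funext fun _ => intervalIntegral.integral_add
    (φ.2.1.continuous.intervalIntegrable _ _) (ψ.2.1.continuous.intervalIntegrable _ _)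
  map_smul' c _ := funext fun _ => intervalIntegral.integral_const_mul c _

lemma hasDerivAt_primitive (φ : TestFun) (x : ℝ) :
    HasDerivAt (primitive φ) ((φ : ℝ → ℝ) x) x :=
  intervalIntegral.integral_hasDerivAt_right (φ.2.1.continuous.intervalIntegrable _ _)
    φ.2.1.continuous.stronglyMeasurable.stronglyMeasurableAtFilter φ.2.1.continuous.continuousAt

lemma primitive_tderiv (φ : TestFun) : primitive (tderiv φ) = φ := by
  obtain ⟨a, b, ha, hφ⟩ := φ.2.exists_tsupport_subset_Ioo
  have hφ0 : (φ : ℝ → ℝ) 0 = 0 := image_eq_zero_of_notMem_tsupport fun h => (hφ h).1.not_gt ha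
  funext x
  exact (intervalIntegral.integral_deriv_eq_sub (fun t _ => φ.2.differentiable t)
    ((tderiv φ).2.1.continuous.intervalIntegrable _ _)).trans (by rw [hφ0, sub_zero])

lemma isTestFunction_primitive (φ : TestFun) (hφ : integralIoi φ = 0) :
    IsTestFunction (primitive φ) := by
  obtain ⟨a, b, ha, hφab⟩ := φ.2.exists_tsupport_subset_Ioo
  have hzero : ∀ t ∉ Ioo a b, (φ : ℝ → ℝ) t = 0 := fun t ht =>
    image_eq_zero_of_notMem_tsupport fun h => ht (hφab h)
  have hout : ∀ x ∉ Ioo a b, primitive φ x = 0 := by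
    intro x hx
    rcases le_or_gt x a with hxa | hax
    · refine (intervalIntegral.integral_congr fun t ht => hzero t fun h => ?_).trans
        intervalIntegral.integral_zero
      exact h.1.not_ge (ht.2.trans (sup_le ha.le hxa))
    · have hbx : b ≤ x := not_lt.mp fun hxb => hx ⟨hax, hxb⟩
      refine (integral_Ioi_eq_intervalIntegral (ha.trans hax).le fun t ht =>
        hzero t fun h => ?_).symm.trans hφ
      exact h.2.not_ge (hbx.trans ht.le)
  have hsupp : support (primitive φ) ⊆ Icc a b := fun x hx =>
    Ioo_subset_Icc_self (not_not.mp fun h => hx (hout x h))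
  refine ⟨contDiff_infty_iff_deriv.mpr ⟨fun x => (hasDerivAt_primitive φ x).differentiableAt, ?_⟩,
    HasCompactSupport.intro isCompact_Icc fun x hx => hout x (fun h => hx (Ioo_subset_Icc_self h)),
    (closure_minimal hsupp isClosed_Icc).trans fun x hx => ha.trans_le hx.1⟩
  rw [funext fun x => (hasDerivAt_primitive φ x).deriv]
  exact φ.2.1

variable {φ₀ : TestFun} (hφ₀ : integralIoi φ₀ = 1)
include hφ₀

noncomputable def antideriv : TestFun →ₗ[ℝ] TestFun :=
  (primitive ∘ₗ (LinearMap.id - integralIoi.smulRight φ₀)).codRestrict TestFun fun φ =>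
    isTestFunction_primitive _ (by simp [hφ₀])

lemma tderiv_antideriv (φ : TestFun) :
    tderiv (antideriv hφ₀ φ) = φ - integralIoi φ • φ₀ :=
  Subtype.ext <| funext fun x => (hasDerivAt_primitive _ x).deriv

lemma antideriv_tderiv (φ : TestFun) : antideriv hφ₀ (tderiv φ) = φ := by
  apply Subtype.ext
  change primitive (tderiv φ - integralIoi (tderiv φ) • φ₀) = φ
  rw [integralIoi_tderiv, zero_smul, sub_zero, primitive_tderiv]

lemma ddt_surjective : Surjective ddt := fun g =>
  ⟨-(g ∘ₗ antideriv hφ₀), LinearMap.ext fun φ => by simp [ddt_apply, antideriv_tderiv hφ₀]⟩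

lemma ker_ddt :
    LinearMap.ker ddt = LinearMap.range (LinearMap.toSpanSingleton ℝ _ integralIoi) := by
  apply le_antisymm
  · intro w hw
    have hw' : ∀ ψ, w (tderiv ψ) = 0 := fun ψ => by
      simpa [ddt_apply] using LinearMap.congr_fun (LinearMap.mem_ker.mp hw) ψ
    refine ⟨w φ₀, LinearMap.ext fun φ => ?_⟩
    have hφ : φ = integralIoi φ • φ₀ + tderiv (antideriv hφ₀ φ) := by
      rw [tderiv_antideriv]; abel
    conv_rhs => rw [hφ, map_add, map_smul, hw']
    simp [mul_comm]
  · rw [LinearMap.range_le_ker_iff]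
    ext φ
    simp [ddt_apply, integralIoi_tderiv]

end Derivative

lemma solvesDAE_iff {n : ℕ} (A B : Matrix (Fin n) (Fin n) ℝ) (f y : Fin n → DistributionIoi) :
    SolvesDAE A B f y ↔ A.toEndPi (ddt.compLeft _ y) + B.toEndPi y = f := by
  simp only [SolvesDAE, funext_iff, Pi.add_apply, Matrix.mulVec, dotProduct, mul_neg,
    Finset.sum_neg_distrib, Matrix.toEndPi_apply, LinearMap.compLeft_apply, comp_apply,
    LinearMap.ext_iff, LinearMap.add_apply, LinearMap.coe_sum, LinearMap.coe_smul, Finset.sum_apply,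
    Pi.smul_apply, ddt_apply, smul_eq_mul]
  exact forall_comm

lemma solvesDAE_blockDiagonal_iff {d q : ℕ} (A₁ B₁ : Matrix (Fin d) (Fin d) ℝ)
    (A₂ B₂ : Matrix (Fin q) (Fin q) ℝ) (f y : Fin (d + q) → DistributionIoi) :
    SolvesDAE (Matrix.reindex finSumFinEquiv finSumFinEquiv (Matrix.fromBlocks A₁ 0 0 A₂))
        (Matrix.reindex finSumFinEquiv finSumFinEquiv (Matrix.fromBlocks B₁ 0 0 B₂)) f y ↔
      SolvesDAE A₁ B₁ (fun i => f (Fin.castAdd q i)) (fun i => y (Fin.castAdd q i)) ∧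
      SolvesDAE A₂ B₂ (fun j => f (Fin.natAdd d j)) (fun j => y (Fin.natAdd d j)) := by
  simp only [SolvesDAE, funext_iff, Fin.forall_fin_add, forall_and]
  simp [Matrix.mulVec, dotProduct, Fin.sum_univ_add]

theorem existsUnique_solvesDAE_of_isNilpotent {q : ℕ} (N : Matrix (Fin q) (Fin q) ℝ)
    (hN : IsNilpotent N) (g : Fin q → DistributionIoi) : ∃! v, SolvesDAE N 1 g v := by
  have hnil : IsNilpotent (N.toEndPi * ddt.compLeft (Fin q)) :=
    (N.commute_toEndPi_compLeft ddt).isNilpotent_mul_right (hN.map _)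
  have hunit : IsUnit (N.toEndPi * ddt.compLeft (Fin q) + 1) :=
    IsNilpotent.isUnit_add_one (R := Module.End ℝ (Fin q → DistributionIoi)) hnil
  simp only [solvesDAE_iff, map_one, Module.End.one_apply]
  exact ((Module.End.isUnit_iff _).mp hunit).existsUnique g

section ExpTwist

variable {d : ℕ}

lemma hasDerivAt_exp_smul_apply (A : Matrix (Fin d) (Fin d) ℝ) (i j : Fin d) (t : ℝ) :
    HasDerivAt (fun s : ℝ => exp (s • A) i j) ((exp (t • A) * A) i j) t := by
  open scoped Matrix.Norms.Operator in
  exact (Matrix.entryLinearMap ℝ ℝ i j).toContinuousLinearMap.hasFDerivAt.comp_hasDerivAt t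
    (hasDerivAt_exp_smul_const A t)

lemma contDiff_exp_smul_apply (A : Matrix (Fin d) (Fin d) ℝ) (i j : Fin d) :
    ContDiff ℝ ∞ (fun t : ℝ => exp (t • A) i j) := by
  open scoped Matrix.Norms.Operator in
  exact (Matrix.entryLinearMap ℝ ℝ i j).toContinuousLinearMap.contDiff.comp
    ((AnalyticOnNhd.contDiff fun x _ => exp_analytic x).comp (contDiff_id.smul contDiff_const))

lemma exp_smul_neg_mul_exp_smul (A : Matrix (Fin d) (Fin d) ℝ) (t : ℝ) :
    exp (t • -A) * exp (t • A) = 1 := by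
  rw [smul_neg, ← Matrix.exp_add_of_commute _ _ (Commute.refl (t • A)).neg_left, neg_add_cancel,
    exp_zero]

noncomputable def mulExp (A : Matrix (Fin d) (Fin d) ℝ) (i j : Fin d) :
    TestFun →ₗ[ℝ] TestFun where
  toFun φ := ⟨fun t => exp (t • A) i j * (φ : ℝ → ℝ) t,
    φ.2.smooth_mul (contDiff_exp_smul_apply A i j)⟩
  map_add' _ _ := Subtype.ext <| funext fun _ => mul_add _ _ _
  map_smul' _ _ := Subtype.ext <| funext fun _ => mul_left_comm _ _ _

lemma mulExp_apply (A : Matrix (Fin d) (Fin d) ℝ) (i j : Fin d) (φ : TestFun) (t : ℝ) :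
    (mulExp A i j φ : ℝ → ℝ) t = exp (t • A) i j * (φ : ℝ → ℝ) t := rfl

lemma tderiv_mulExp (A : Matrix (Fin d) (Fin d) ℝ) (i j : Fin d) (φ : TestFun) :
    tderiv (mulExp A i j φ) = ∑ k, A k j • mulExp A i k φ + mulExp A i j (tderiv φ) := by
  ext t
  change deriv (fun s => exp (s • A) i j * (φ : ℝ → ℝ) s) t = _
  rw [((hasDerivAt_exp_smul_apply A i j t).fun_mul (φ.2.differentiable t).hasDerivAt).deriv]
  simp only [tderiv, Submodule.coe_add, AddSubmonoidClass.coe_finsetSum, SetLike.val_smul,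
    Pi.add_apply, Finset.sum_apply, Pi.smul_apply, mulExp_apply, smul_eq_mul, Matrix.mul_apply,
    Finset.sum_mul]
  exact congrArg (· + _) (Finset.sum_congr rfl fun _ _ => by ring)

lemma sum_mulExp_mulExp_neg (A : Matrix (Fin d) (Fin d) ℝ) (i k : Fin d) (φ : TestFun) :
    ∑ j, mulExp A j k (mulExp (-A) i j φ) = (1 : Matrix (Fin d) (Fin d) ℝ) i k • φ := by
  ext t
  have h := congrArg (fun M : Matrix (Fin d) (Fin d) ℝ => M i k) (exp_smul_neg_mul_exp_smul A t)
  simp only [smul_neg, Matrix.mul_apply, AddSubmonoidClass.coe_finsetSum, Finset.sum_apply,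
    mulExp_apply, SetLike.val_smul, Pi.smul_apply, smul_eq_mul] at h ⊢
  rw [← h, Finset.sum_mul]
  exact Finset.sum_congr rfl fun _ _ => by ring

noncomputable def expTwist (A : Matrix (Fin d) (Fin d) ℝ) :
    Module.End ℝ (Fin d → DistributionIoi) where
  toFun u i := ∑ j, u j ∘ₗ mulExp A i j
  map_add' u v := by ext; simp [Finset.sum_add_distrib]
  map_smul' c u := by ext; simp [Finset.smul_sum]

lemma expTwist_apply (A : Matrix (Fin d) (Fin d) ℝ) (u : Fin d → DistributionIoi) (i : Fin d)
    (φ : TestFun) : expTwist A u i φ = ∑ j, u j (mulExp A i j φ) := by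
  simp [expTwist]

lemma expTwist_neg_mul_expTwist (A : Matrix (Fin d) (Fin d) ℝ) :
    expTwist (-A) * expTwist A = 1 := by
  refine LinearMap.ext fun u => funext fun i => LinearMap.ext fun φ => ?_
  simp only [Module.End.mul_apply, expTwist_apply, Module.End.one_apply]
  rw [Finset.sum_comm]
  simp_rw [← map_sum, sum_mulExp_mulExp_neg, map_smul, Matrix.one_apply, ite_smul, one_smul,
    zero_smul, Finset.sum_ite_eq, Finset.mem_univ, if_true]

lemma ddt_compLeft_mul_expTwist (A : Matrix (Fin d) (Fin d) ℝ) :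
    ddt.compLeft (Fin d) * expTwist A = expTwist A * (ddt.compLeft (Fin d) + A.toEndPi) := by
  refine LinearMap.ext fun u => funext fun i => LinearMap.ext fun φ => ?_
  simp only [Module.End.mul_apply, LinearMap.compLeft_apply, comp_apply, ddt_apply,
    expTwist_apply, LinearMap.add_apply, Pi.add_apply, Matrix.toEndPi_apply]
  simp only [tderiv_mulExp, map_add, map_sum, map_smul, LinearMap.coe_sum, Finset.sum_apply,
    LinearMap.smul_apply, smul_eq_mul, neg_add, Finset.sum_add_distrib, Finset.sum_neg_distrib]
  rw [Finset.sum_comm]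
  abel

noncomputable def expTwistEquiv (A : Matrix (Fin d) (Fin d) ℝ) :
    (Fin d → DistributionIoi) ≃ₗ[ℝ] (Fin d → DistributionIoi) :=
  .ofLinearMap (expTwist A) (expTwist (-A))
    (by simpa only [neg_neg] using expTwist_neg_mul_expTwist (-A) :
      expTwist A * expTwist (-A) = 1)
    (expTwist_neg_mul_expTwist A)

lemma ddt_compLeft_add_toEndPi_eq (J : Matrix (Fin d) (Fin d) ℝ) :
    ddt.compLeft (Fin d) + J.toEndPi = (expTwistEquiv J).symm.toLinearMap ∘ₗ
      ddt.compLeft (Fin d) ∘ₗ (expTwistEquiv J).toLinearMap := by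
  change _ = expTwist (-J) * (ddt.compLeft (Fin d) * expTwist J)
  rw [ddt_compLeft_mul_expTwist, ← mul_assoc, expTwist_neg_mul_expTwist, one_mul]

end ExpTwist

section RegularBlock

variable {d : ℕ} {φ₀ : TestFun} (hφ₀ : integralIoi φ₀ = 1) (J : Matrix (Fin d) (Fin d) ℝ)
include hφ₀

lemma surjective_ddt_compLeft_add_toEndPi :
    Surjective (ddt.compLeft (Fin d) + J.toEndPi : Module.End ℝ (Fin d → DistributionIoi)) := by
  rw [ddt_compLeft_add_toEndPi_eq]
  exact (expTwistEquiv J).symm.surjective.comp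
    (((ddt_surjective hφ₀).comp_left (α := Fin d)).comp (expTwistEquiv J).surjective)

lemma ker_ddt_compLeft_add_toEndPi :
    LinearMap.ker (ddt.compLeft (Fin d) + J.toEndPi : Module.End ℝ (Fin d → DistributionIoi)) =
      LinearMap.range ((expTwistEquiv J).symm.toLinearMap ∘ₗ
        (LinearMap.toSpanSingleton ℝ DistributionIoi integralIoi).compLeft (Fin d)) := by
  rw [ddt_compLeft_add_toEndPi_eq, LinearEquiv.ker_comp, LinearMap.ker_comp,
    Submodule.comap_equiv_eq_map_symm, LinearMap.range_comp, LinearMap.ker_compLeft, ker_ddt hφ₀,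
    LinearMap.range_compLeft]

theorem existsUnique_solvesDAE_one_of_isUnit (g : Fin d → DistributionIoi) (u0 : Fin d → ℝ)
    (hM : IsUnit (Matrix.of fun i j : Fin d => ∫ t in Ioi (0 : ℝ), exp (-(t • J)) i j * φ₀.1 t)) :
    ∃! u, SolvesDAE 1 J g u ∧ ∀ i, u i φ₀ = u0 i := by
  have hIK : (LinearMap.applyₗ φ₀).compLeft (Fin d) ∘ₗ (expTwistEquiv J).symm.toLinearMap ∘ₗ
      (LinearMap.toSpanSingleton ℝ DistributionIoi integralIoi).compLeft (Fin d) =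
      (Matrix.of fun i j : Fin d => ∫ t in Ioi (0 : ℝ), exp (-(t • J)) i j * φ₀.1 t).mulVecLin := by
    refine LinearMap.ext fun c => funext fun i => ?_
    simp only [expTwistEquiv, LinearEquiv.symm_ofLinearMap, LinearEquiv.toLinearMap_ofLinearMap,
      LinearMap.coe_comp, comp_apply, LinearMap.compLeft_apply, LinearMap.applyₗ_apply_apply,
      expTwist_apply, LinearMap.toSpanSingleton_apply, LinearMap.smul_apply, integralIoi_apply,
      mulExp_apply, smul_neg, smul_eq_mul, Matrix.mulVecBilin_apply, Matrix.mulVec, dotProduct,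
      Matrix.of_apply, mul_comm]
  have := LinearMap.existsUnique_of_ker_eq_range (surjective_ddt_compLeft_add_toEndPi hφ₀ J)
    (ker_ddt_compLeft_add_toEndPi hφ₀ J)
    (by rw [hIK]; exact ⟨Matrix.mulVec_injective_iff_isUnit.mpr hM,
      Matrix.mulVec_surjective_iff_isUnit.mpr hM⟩)
    g u0
  simpa [solvesDAE_iff, funext_iff] using this

end RegularBlock

end DAE

/-- Existence and uniqueness of the distributional solution of a DAE in Kronecker
canonical form `blockdiag(I_d, N) ẏ + blockdiag(J, I_q) y = f` with `N` nilpotent,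
subject to the initial condition `⟨y_i, φ₀⟩ = u⁰_i`, `i = 1,…,d`, provided
`∫₀^∞ e^{-Jt} φ₀(t) dt` is invertible. -/
theorem KCF_DAE_exists_unique {d q : ℕ} (J : Matrix (Fin d) (Fin d) ℝ)
    (N : Matrix (Fin q) (Fin q) ℝ) (hN : IsNilpotent N)
    (f : Fin (d + q) → DistributionIoi) (u0 : Fin d → ℝ) (φ₀ : TestFun)
    (hφ₀ : ∫ t in Set.Ioi (0 : ℝ), φ₀.1 t = 1)
    (hM : IsUnit (Matrix.of fun i j : Fin d =>
      ∫ t in Set.Ioi (0 : ℝ), (NormedSpace.exp (-(t • J))) i j * φ₀.1 t)) :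
    ∃! y : Fin (d + q) → DistributionIoi,
      SolvesDAE
        (Matrix.reindex finSumFinEquiv finSumFinEquiv
          (Matrix.fromBlocks (1 : Matrix (Fin d) (Fin d) ℝ) 0 0 N))
        (Matrix.reindex finSumFinEquiv finSumFinEquiv
          (Matrix.fromBlocks J 0 0 (1 : Matrix (Fin q) (Fin q) ℝ)))
        f y ∧
      ∀ i : Fin d, y (Fin.castAdd q i) φ₀ = u0 i := by
  have hu := DAE.existsUnique_solvesDAE_one_of_isUnit hφ₀ J (fun i => f (Fin.castAdd q i)) u0 hM
  have hv := DAE.existsUnique_solvesDAE_of_isNilpotent N hN (fun j => f (Fin.natAdd d j))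
  refine (existsUnique_congr fun y => ?_).mp (Fin.existsUnique_castAdd_natAdd hu hv)
  rw [DAE.solvesDAE_blockDiagonal_iff]
  tauto
end

section
/- Let φ : ℝ → ℝ be smooth with compact support and φ not identically zero. Then for every natural number k the strict inequality ‖φ^{(k+1)}‖² < ‖φ^{(k)}‖ · ‖φ^{(k+2)}‖ holds; equivalently, the sequence of ratios ‖φ^{(k)}‖/‖φ^{(k+1)}‖ is strictly decreasing in k. -/
/-!
With `f = φ⁽ᵏ⁾`, integration by parts gives `‖f'‖² = -∫ f f'' ≤ ‖f‖ ‖f''‖` by Cauchy–Schwarz.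
Equality would force `f'' = c f` with `c = -‖f'‖² / ‖f‖² < 0`; the energy `f'² - c f²` is then
constant, hence zero because it has compact support, and this forces `f = 0`.
-/

open MeasureTheory
open scoped ContDiff

theorem HasCompactSupport.pow {α M : Type*} [TopologicalSpace α] [MonoidWithZero M] {f : α → M}
    (hf : HasCompactSupport f) {n : ℕ} (hn : n ≠ 0) : HasCompactSupport (fun x ↦ f x ^ n) :=
  hf.comp_left (g := (· ^ n)) (zero_pow hn)

section CompactSupport

variable {E : Type*} [NormedAddCommGroup E] [NormedSpace ℝ E] {f : ℝ → E}

theorem HasCompactSupport.iterate_deriv (hf : HasCompactSupport f) :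
    ∀ n : ℕ, HasCompactSupport (deriv^[n] f)
  | 0 => hf
  | n + 1 => by
    rw [Function.iterate_succ_apply']
    exact (hf.iterate_deriv n).deriv

theorem HasCompactSupport.eq_zero_of_deriv_eq_zero (hf : HasCompactSupport f)
    (hd : Differentiable ℝ f) (h : deriv f = 0) : f = 0 := by
  obtain ⟨t₀, ht₀⟩ := (Set.ne_univ_iff_exists_notMem _).mp hf.isCompact.ne_univ
  funext t
  rw [is_const_of_deriv_eq_zero hd (congrFun h) t t₀, image_eq_zero_of_notMem_tsupport ht₀,
    Pi.zero_apply]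

theorem HasCompactSupport.iterate_deriv_ne_zero (hf : HasCompactSupport f)
    (hf' : ContDiff ℝ ∞ f) (hne : f ≠ 0) : ∀ n : ℕ, deriv^[n] f ≠ 0
  | 0 => hne
  | n + 1 => by
    rw [Function.iterate_succ_apply']
    exact fun h ↦ hf.iterate_deriv_ne_zero hf' hne n <|
      (hf.iterate_deriv n).eq_zero_of_deriv_eq_zero
        ((hf'.iterate_deriv n).differentiable (by simp)) h

end CompactSupport

theorem HasCompactSupport.integral_mul_deriv_eq_neg_integral_deriv_mul {u v : ℝ → ℝ}
    (hsu : HasCompactSupport u) (hu : ContDiff ℝ 1 u) (hv : ContDiff ℝ 1 v) :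
    ∫ t, u t * deriv v t = -∫ t, deriv u t * v t :=
  integral_mul_deriv_eq_deriv_mul_of_integrable
    (fun t _ ↦ (hu.differentiable one_ne_zero t).hasDerivAt)
    (fun t _ ↦ (hv.differentiable one_ne_zero t).hasDerivAt)
    ((hu.continuous.mul (hv.continuous_deriv le_rfl)).integrable_of_hasCompactSupport
      hsu.mul_right)
    (((hu.continuous_deriv le_rfl).mul hv.continuous).integrable_of_hasCompactSupport
      hsu.deriv.mul_right)
    ((hu.continuous.mul hv.continuous).integrable_of_hasCompactSupport hsu.mul_right)

theorem HasCompactSupport.eq_zero_of_deriv_deriv_eq_mul {f : ℝ → ℝ} (hf : HasCompactSupport f)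
    (hd : Differentiable ℝ f) (hd' : Differentiable ℝ (deriv f)) {c : ℝ} (hc : c < 0)
    (h : ∀ t, deriv (deriv f) t = c * f t) : f = 0 := by
  set energy : ℝ → ℝ := fun t ↦ deriv f t ^ 2 - c * f t ^ 2
  have h_energy : energy = 0 := by
    have h_supp : HasCompactSupport energy :=
      (hf.deriv.pow two_ne_zero).sub (hf.pow two_ne_zero).mul_left
    have h_deriv (t : ℝ) : HasDerivAt energy 0 t := by
      have := ((hd' t).hasDerivAt.pow 2).sub (((hd t).hasDerivAt.pow 2).const_mul c)
      rw [h t] at this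
      exact this.congr_deriv (by push_cast; ring)
    exact h_supp.eq_zero_of_deriv_eq_zero (fun t ↦ (h_deriv t).differentiableAt)
      (funext fun t ↦ (h_deriv t).deriv)
  funext t
  have h_t : deriv f t ^ 2 - c * f t ^ 2 = 0 := congrFun h_energy t
  have h_sq : f t ^ 2 = 0 := by nlinarith [sq_nonneg (deriv f t), sq_nonneg (f t)]
  exact pow_eq_zero_iff two_ne_zero |>.mp h_sq

section SquareIntegral

variable {X : Type*} [MeasurableSpace X] [TopologicalSpace X] [OpensMeasurableSpace X]
  {μ : Measure X} [IsFiniteMeasureOnCompacts μ] {f g : X → ℝ}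

theorem Continuous.integral_sq_pos_of_hasCompactSupport [μ.IsOpenPosMeasure] (hf : Continuous f)
    (hfs : HasCompactSupport f) (hne : f ≠ 0) : 0 < ∫ x, f x ^ 2 ∂μ := by
  obtain ⟨x, hx⟩ := Function.ne_iff.mp hne
  exact (hf.pow 2).integral_pos_of_hasCompactSupport_nonneg_nonzero
    (hfs.pow two_ne_zero) (fun x ↦ sq_nonneg (f x)) (pow_ne_zero 2 hx)

theorem integral_sub_mul_sq (hf : Continuous f) (hg : Continuous g) (hfs : HasCompactSupport f)
    (hgs : HasCompactSupport g) (c : ℝ) :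
    ∫ x, (g x - c * f x) ^ 2 ∂μ =
      ∫ x, g x ^ 2 ∂μ - 2 * c * ∫ x, f x * g x ∂μ + c ^ 2 * ∫ x, f x ^ 2 ∂μ := by
  have hff : Integrable (fun x ↦ f x ^ 2) μ :=
    (hf.pow 2).integrable_of_hasCompactSupport (hfs.pow two_ne_zero)
  have hgg : Integrable (fun x ↦ g x ^ 2) μ :=
    (hg.pow 2).integrable_of_hasCompactSupport (hgs.pow two_ne_zero)
  have hfg : Integrable (fun x ↦ f x * g x) μ :=
    (hf.mul hg).integrable_of_hasCompactSupport hfs.mul_right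
  calc ∫ x, (g x - c * f x) ^ 2 ∂μ
      = ∫ x, g x ^ 2 - 2 * c * (f x * g x) + c ^ 2 * f x ^ 2 ∂μ := by
        congr 1 with x
        ring
    _ = _ := by
      rw [integral_add (by exact hgg.sub (hfg.const_mul _)) (hff.const_mul _),
        integral_sub hgg (hfg.const_mul _), integral_const_mul, integral_const_mul]

theorem eq_mul_of_integral_sq_mul_integral_sq_le [μ.IsOpenPosMeasure] (hf : Continuous f)
    (hg : Continuous g) (hfs : HasCompactSupport f) (hgs : HasCompactSupport g) (hne : f ≠ 0)
    (h : (∫ x, f x ^ 2 ∂μ) * ∫ x, g x ^ 2 ∂μ ≤ (∫ x, f x * g x ∂μ) ^ 2) (x : X) :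
    g x = (∫ x, f x * g x ∂μ) / (∫ x, f x ^ 2 ∂μ) * f x := by
  have hA : 0 < ∫ x, f x ^ 2 ∂μ := hf.integral_sq_pos_of_hasCompactSupport hfs hne
  set c := (∫ x, f x * g x ∂μ) / (∫ x, f x ^ 2 ∂μ) with hc
  have h_nonpos : ∫ x, (g x - c * f x) ^ 2 ∂μ ≤ 0 := by
    rw [integral_sub_mul_sq hf hg hfs hgs, hc]
    generalize ∫ x, f x ^ 2 ∂μ = A, ∫ x, f x * g x ∂μ = P, ∫ x, g x ^ 2 ∂μ = C at *
    have : C - 2 * (P / A) * P + (P / A) ^ 2 * A = (A * C - P ^ 2) / A := by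
      field_simp
      ring
    rw [this]
    exact div_nonpos_of_nonpos_of_nonneg (sub_nonpos.mpr h) hA.le
  by_contra hx
  have h_ne : (fun x ↦ g x - c * f x) ≠ 0 := Function.ne_iff.mpr ⟨x, sub_ne_zero.mpr hx⟩
  exact (h_nonpos.trans_lt <|
    (hg.sub (continuous_const.mul hf)).integral_sq_pos_of_hasCompactSupport
      (hgs.sub hfs.mul_left) h_ne).false

end SquareIntegral

theorem HasCompactSupport.integral_deriv_sq_lt_sqrt_mul_sqrt {f : ℝ → ℝ}
    (hfs : HasCompactSupport f) (hf : ContDiff ℝ 2 f) (hne : f ≠ 0) :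
    ∫ t, deriv f t ^ 2 < √(∫ t, f t ^ 2) * √(∫ t, deriv (deriv f) t ^ 2) := by
  have hf' : ContDiff ℝ 1 (deriv f) := hf.iterate_deriv' 1 1
  have hne' : deriv f ≠ 0 := fun h ↦
    hne (hfs.eq_zero_of_deriv_eq_zero (hf.differentiable two_ne_zero) h)
  have hA : 0 < ∫ t, f t ^ 2 := hf.continuous.integral_sq_pos_of_hasCompactSupport hfs hne
  have hB : 0 < ∫ t, deriv f t ^ 2 :=
    hf'.continuous.integral_sq_pos_of_hasCompactSupport hfs.deriv hne'
  have h_parts : ∫ t, f t * deriv (deriv f) t = -∫ t, deriv f t ^ 2 := by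
    simpa only [sq] using hfs.integral_mul_deriv_eq_neg_integral_deriv_mul
      (hf.of_le one_le_two) hf'
  rw [← Real.sqrt_mul hA.le, Real.lt_sqrt hB.le]
  by_contra! h_le
  have h_ode := eq_mul_of_integral_sq_mul_integral_sq_le hf.continuous
    (hf'.continuous_deriv le_rfl) hfs hfs.deriv.deriv hne (by rwa [h_parts, neg_sq])
  rw [h_parts] at h_ode
  exact hne (hfs.eq_zero_of_deriv_deriv_eq_mul (hf.differentiable two_ne_zero)
    (hf'.differentiable one_ne_zero) (div_neg_of_neg_of_pos (neg_neg_of_pos hB) hA) h_ode)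

theorem Real.sqrt_div_sqrt_lt_sqrt_div_sqrt {a b c : ℝ} (hb : 0 < b) (h : b < √a * √c) :
    √b / √c < √a / √b := by
  have hc : 0 < √c := pos_of_mul_pos_right (hb.trans h) (Real.sqrt_nonneg a)
  rw [div_lt_div_iff₀ hc (Real.sqrt_pos.mpr hb), Real.mul_self_sqrt hb.le]
  exact h

/-- For a smooth compactly supported `φ : ℝ → ℝ`, not identically zero, the chain of strict
inequalities `‖φ⁽ᵏ⁺¹⁾‖² < ‖φ⁽ᵏ⁾‖ ‖φ⁽ᵏ⁺²⁾‖` holds; equivalently, the ratios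
`‖φ⁽ᵏ⁾‖ / ‖φ⁽ᵏ⁺¹⁾‖` are strictly decreasing in `k`.  Here `‖g‖ = (∫ g²)^{1/2}`. -/
theorem norm_iteratedDeriv_sq_lt (φ : ℝ → ℝ)
    (hφ : ContDiff ℝ ∞ φ) (hsupp : HasCompactSupport φ) (hne : φ ≠ 0) (k : ℕ) :
    (∫ t : ℝ, (deriv^[k + 1] φ t) ^ 2) <
      Real.sqrt (∫ t : ℝ, (deriv^[k] φ t) ^ 2) *
        Real.sqrt (∫ t : ℝ, (deriv^[k + 2] φ t) ^ 2) ∧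
    Real.sqrt (∫ t : ℝ, (deriv^[k + 1] φ t) ^ 2) /
        Real.sqrt (∫ t : ℝ, (deriv^[k + 2] φ t) ^ 2) <
      Real.sqrt (∫ t : ℝ, (deriv^[k] φ t) ^ 2) /
        Real.sqrt (∫ t : ℝ, (deriv^[k + 1] φ t) ^ 2) := by
  have h_pos : 0 < ∫ t, deriv^[k + 1] φ t ^ 2 :=
    ((hφ.iterate_deriv (k + 1)).continuous).integral_sq_pos_of_hasCompactSupport
      (hsupp.iterate_deriv (k + 1)) (hsupp.iterate_deriv_ne_zero hφ hne (k + 1))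
  have h_lt : ∫ t, deriv^[k + 1] φ t ^ 2 <
      √(∫ t, deriv^[k] φ t ^ 2) * √(∫ t, deriv^[k + 2] φ t ^ 2) := by
    rw [Function.iterate_succ', Function.iterate_succ', Function.iterate_succ']
    exact (hsupp.iterate_deriv k).integral_deriv_sq_lt_sqrt_mul_sqrt
      ((hφ.iterate_deriv k).of_le ENat.LEInfty.out) (hsupp.iterate_deriv_ne_zero hφ hne k)
  exact ⟨h_lt, Real.sqrt_div_sqrt_lt_sqrt_div_sqrt h_pos h_lt⟩
end

section
/- Let ρ₁, …, ρ_q ∈ ℝ^m (viewed as row vectors), not all zero, and let r be the greatest index with ρ_r ≠ 0. Then the q×(m·q) block matrix H whose (i,j)-th m-dimensional row block (for i, j = 1,…,q) equals ρ_{i+j−1} when i + j − 1 ≤ q and equals the zero row vector otherwise — that is, H has rows (ρ_i, ρ_{i+1}, …, ρ_q, 0, …, 0) for i = 1,…,q — has rank exactly r. Consequently, the linear map ℝ^{mq} → ℝ^q given by H is onto ℝ^r × {0}^{q−r}. -/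
/-!
The rows of `H` past `r` vanish, so `rank H ≤ r + 1` and the range of `H` lies in
`ℝ^{r+1} × {0}`. Fix `l` with `ρ r l ≠ 0`. The rows `0, …, r` of `H` against the columns
`(r - j, l)`, `j = 0, …, r`, form an upper triangular block with constant diagonal `ρ r l`
(its `(i, j)` entry is `ρ (r + i - j) l`), so `rank H ≥ r + 1`. The range is then a subspace
of `ℝ^{r+1} × {0}` of full dimension.
-/

namespace Matrix

theorem card_le_rank_of_isUpperTriangular_submatrix {R m n ι : Type*} [CommRing R] [IsDomain R]
    [Fintype n] [Fintype ι] [LinearOrder ι] (A : Matrix m n R) (f : ι → m) (g : ι → n)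
    (htri : (A.submatrix f g).IsUpperTriangular) (hdiag : ∀ i, A (f i) (g i) ≠ 0) :
    Fintype.card ι ≤ A.rank := by
  classical
  calc Fintype.card ι = (A.submatrix f g * 1).rank := by
        rw [rank_mul_eq_right_of_isUpperTriangular _ _ htri hdiag, rank_one]
    _ ≤ A.rank := by rw [Matrix.mul_one]; exact rank_submatrix_le A f g

theorem range_mulVec_eq_of_card_le_rank {K m n : Type*} [Field K] [Fintype m] [Fintype n]
    (A : Matrix m n K) (s : Finset m) (hrow : ∀ i ∉ s, A i = 0) (hrank : s.card ≤ A.rank) :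
    Set.range A.mulVec = {y | ∀ i ∉ s, y i = 0} := by
  set W : Submodule K (m → K) := Submodule.pi (↑s)ᶜ fun _ => ⊥
  have hW : (W : Set (m → K)) = {y | ∀ i ∉ s, y i = 0} := by
    ext y
    simp [W]
  have hle : LinearMap.range A.mulVecLin ≤ W := by
    rintro _ ⟨x, rfl⟩
    rw [← SetLike.mem_coe, hW]
    intro i hi
    show A i ⬝ᵥ x = 0
    rw [hrow i hi, zero_dotProduct]
  have hfinrank : Module.finrank K W ≤ s.card := by
    have hinj : Function.Injective ((LinearMap.funLeft K K ((↑) : s → m)).comp W.subtype) := by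
      rw [← LinearMap.ker_eq_bot, LinearMap.ker_eq_bot']
      intro y hy
      ext i
      by_cases hi : i ∈ s
      · exact congr_fun hy ⟨i, hi⟩
      · exact (Submodule.mem_pi.1 y.2) i hi
    simpa using LinearMap.finrank_le_finrank_of_injective hinj
  rw [← hW, ← Submodule.eq_of_le_of_finrank_le hle (hfinrank.trans hrank)]
  rfl

end Matrix

section BlockHankel

variable {R : Type*} {q m : ℕ}

def blockHankel [Zero R] (ρ : Fin q → Fin m → R) : Matrix (Fin q) (Fin q × Fin m) R :=
  Matrix.of fun i jl => if h : (i : ℕ) + jl.1 < q then ρ ⟨i + jl.1, h⟩ jl.2 else 0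

theorem blockHankel_apply_of_add_eq [Zero R] (ρ : Fin q → Fin m → R) {r i j : Fin q}
    (hij : (i : ℕ) + j = r) (l : Fin m) : blockHankel ρ i (j, l) = ρ r l := by
  simp [blockHankel, hij]

theorem blockHankel_apply_of_lt_add [Zero R] (ρ : Fin q → Fin m → R) {r : Fin q}
    (hmax : ∀ k, r < k → ρ k = 0) {i j : Fin q} (hij : (r : ℕ) < i + j) (l : Fin m) :
    blockHankel ρ i (j, l) = 0 := by
  rw [blockHankel, Matrix.of_apply]
  split_ifs with h
  · rw [hmax ⟨i + j, h⟩ (Fin.lt_def.2 hij)]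
    rfl
  · rfl

theorem blockHankel_row_eq_zero [Zero R] (ρ : Fin q → Fin m → R) {r : Fin q}
    (hmax : ∀ k, r < k → ρ k = 0) {i : Fin q} (hi : r < i) : blockHankel ρ i = 0 := by
  ext ⟨j, l⟩
  refine blockHankel_apply_of_lt_add ρ hmax ?_ l
  have := Fin.lt_def.1 hi
  omega

theorem le_rank_blockHankel [CommRing R] [IsDomain R] (ρ : Fin q → Fin m → R) {r : Fin q}
    (hr : ρ r ≠ 0) (hmax : ∀ k, r < k → ρ k = 0) : (r : ℕ) + 1 ≤ (blockHankel ρ).rank := by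
  obtain ⟨l, hl⟩ := Function.ne_iff.mp hr
  refine (Fintype.card_fin _).symm.trans_le <|
    Matrix.card_le_rank_of_isUpperTriangular_submatrix (blockHankel ρ)
      (Fin.castLE r.isLt) (fun j => (Fin.castLE r.isLt j.rev, l)) (fun i j hji => ?_) fun i => ?_
  · refine blockHankel_apply_of_lt_add ρ hmax ?_ l
    have := Fin.lt_def.1 hji
    simp only [Fin.val_castLE, Fin.val_rev, id] at this ⊢
    omega
  · rw [blockHankel_apply_of_add_eq ρ]
    · exact hl
    · simp only [Fin.val_castLE, Fin.val_rev]
      omega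

end BlockHankel

/-- Let `ρ 0, …, ρ (q-1) ∈ ℝ^m` be row vectors, not all zero, and let `r` be the greatest
index with `ρ r ≠ 0`.  The `q × (m q)` block-Hankel matrix `H` with `(i,j)`-th row block
`ρ (i+j)` (when `i + j < q`, and `0` otherwise) has rank `r + 1` (i.e. the number of
nonzero rows `ρ`), and the associated linear map `ℝ^{mq} → ℝ^q` maps onto the subspace of
vectors whose coordinates past `r` all vanish. -/
theorem hankel_block_matrix_rank_and_range {q m : ℕ} (ρ : Fin q → Fin m → ℝ)
    (r : Fin q) (hr : ρ r ≠ 0) (hmax : ∀ k : Fin q, r < k → ρ k = 0) :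
    (Matrix.of fun (i : Fin q) (jl : Fin q × Fin m) =>
        if h : (i : ℕ) + (jl.1 : ℕ) < q then ρ ⟨(i : ℕ) + (jl.1 : ℕ), h⟩ jl.2 else 0).rank
      = (r : ℕ) + 1 ∧
    Set.range (Matrix.of fun (i : Fin q) (jl : Fin q × Fin m) =>
        if h : (i : ℕ) + (jl.1 : ℕ) < q then ρ ⟨(i : ℕ) + (jl.1 : ℕ), h⟩ jl.2 else 0).mulVec
      = {y : Fin q → ℝ | ∀ i : Fin q, r < i → y i = 0} := by
  change (blockHankel ρ).rank = _ ∧ Set.range (blockHankel ρ).mulVec = _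
  have hrow : ∀ i ∉ Finset.Iic r, blockHankel ρ i = 0 := fun i hi =>
    blockHankel_row_eq_zero ρ hmax (by simpa using hi)
  have hrank : (blockHankel ρ).rank = r + 1 :=
    le_antisymm
      ((Matrix.rank_le_card_of_support_subset _ _
        (Function.support_subset_iff'.2 hrow)).trans_eq (Fin.card_Iic r))
      (le_rank_blockHankel ρ hr hmax)
  refine ⟨hrank, ?_⟩
  simpa using Matrix.range_mulVec_eq_of_card_le_rank _ _ hrow (by rw [hrank, Fin.card_Iic])
end
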